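/- arXiv:2311.09600 — 9 statements merged into one kernel-verified Lean document; each statement's English description precedes it below -/
import Mathlib

section
/- Let (𝒞, 𝒟, ◁, ▷) be a matched pair on object set V. Then the pairs (d, c), where c : z ⟶ m is a 𝒞-morphism and d : m ⟶ y is a 𝒟-morphism, form the morphisms z ⟶ y of a category 𝒞 ⋈ 𝒟 with object set V: the composition (d₁, c₁) ∘ (d₂, c₂) = (d₁ ∘ (c₁ ◁ d₂), (c₁ ▷ d₂) ∘ c₂) is associative, and (id_x, id_x) is a two-sided identity at each x ∈ V. Moreover the maps ι_𝒞 : c ↦ (id_{range c}, c) and ι_𝒟 : d ↦ (d, id_{source d}) are faithful functors ι_𝒞 : 𝒞 ⥤ 𝒞 ⋈ 𝒟 and ι_𝒟 : 𝒟 ⥤ 𝒞 ⋈ 𝒟 (identity on objects, preserving identities and composition, and injective on hom-sets). -/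
open CategoryTheory

universe v u

/-- A matched pair of small-category structures `C`, `D` on a common object type `V`.
A `C`-morphism `c : m ⟶ y` (source `m`, range `y`) and a `D`-morphism `d : z ⟶ m` determine
an object `w c d`, a `D`-morphism `c ◁ d : w c d ⟶ y` and a `C`-morphism `c ▷ d : z ⟶ w c d`.
Morphism equations across different intermediate objects are expressed with `HEq`. -/
structure MatchedPair (V : Type u) (C : Category.{v} V) (D : Category.{v} V) where
  w : ∀ {z m y : V}, C.Hom m y → D.Hom z m → V
  la : ∀ {z m y : V} (c : C.Hom m y) (d : D.Hom z m), D.Hom (w c d) y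
  ra : ∀ {z m y : V} (c : C.Hom m y) (d : D.Hom z m), C.Hom z (w c d)
  w_id_left : ∀ {z m : V} (d : D.Hom z m), w (C.id m) d = z
  la_id_left : ∀ {z m : V} (d : D.Hom z m), HEq (la (C.id m) d) d
  ra_id_left : ∀ {z m : V} (d : D.Hom z m), HEq (ra (C.id m) d) (C.id z)
  w_id_right : ∀ {m y : V} (c : C.Hom m y), w c (D.id m) = y
  la_id_right : ∀ {m y : V} (c : C.Hom m y), HEq (la c (D.id m)) (D.id y)
  ra_id_right : ∀ {m y : V} (c : C.Hom m y), HEq (ra c (D.id m)) c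
  w_comp_left : ∀ {z m k y : V} (c₁ : C.Hom k y) (c₂ : C.Hom m k) (d : D.Hom z m),
      w (C.comp c₂ c₁) d = w c₁ (la c₂ d)
  la_comp_left : ∀ {z m k y : V} (c₁ : C.Hom k y) (c₂ : C.Hom m k) (d : D.Hom z m),
      HEq (la (C.comp c₂ c₁) d) (la c₁ (la c₂ d))
  ra_comp_left : ∀ {z m k y : V} (c₁ : C.Hom k y) (c₂ : C.Hom m k) (d : D.Hom z m),
      HEq (ra (C.comp c₂ c₁) d) (C.comp (ra c₂ d) (ra c₁ (la c₂ d)))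
  w_comp_right : ∀ {z k m y : V} (c : C.Hom m y) (d₁ : D.Hom k m) (d₂ : D.Hom z k),
      w c (D.comp d₂ d₁) = w (ra c d₁) d₂
  la_comp_right : ∀ {z k m y : V} (c : C.Hom m y) (d₁ : D.Hom k m) (d₂ : D.Hom z k),
      HEq (la c (D.comp d₂ d₁)) (D.comp (la (ra c d₁) d₂) (la c d₁))
  ra_comp_right : ∀ {z k m y : V} (c : C.Hom m y) (d₁ : D.Hom k m) (d₂ : D.Hom z k),
      HEq (ra c (D.comp d₂ d₁)) (ra (ra c d₁) d₂)

namespace MatchedPair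

variable {V : Type u} {C D : Category.{v} V}

/-- Morphisms `z ⟶ y` of the Zappa–Szép product `𝒞 ⋈ 𝒟`: pairs `(d, c)` with
`c : z ⟶ m` a `𝒞`-morphism and `d : m ⟶ y` a `𝒟`-morphism. -/
def ZSHom (_M : MatchedPair V C D) (z y : V) : Type (max u v) := Σ m : V, D.Hom m y × C.Hom z m

/-- The identity `(id_x, id_x)` of `𝒞 ⋈ 𝒟` at `x`. -/
def zsId (M : MatchedPair V C D) (x : V) : M.ZSHom x x := ⟨x, (D.id x, C.id x)⟩

/-- Composition in `𝒞 ⋈ 𝒟`: `(d₁, c₁) ∘ (d₂, c₂) = (d₁ ∘ (c₁ ◁ d₂), (c₁ ▷ d₂) ∘ c₂)`. -/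
def zsComp (M : MatchedPair V C D) {z m y : V} (f : M.ZSHom m y) (g : M.ZSHom z m) : M.ZSHom z y :=
  ⟨M.w f.2.2 g.2.1, (D.comp (M.la f.2.2 g.2.1) f.2.1, C.comp g.2.2 (M.ra f.2.2 g.2.1))⟩

/-- The canonical embedding `ι_𝒞 : 𝒞 → 𝒞 ⋈ 𝒟`, `c ↦ (id_{range c}, c)`. -/
def iotaC (M : MatchedPair V C D) {z m : V} (c : C.Hom z m) : M.ZSHom z m := ⟨m, (D.id m, c)⟩

/-- The canonical embedding `ι_𝒟 : 𝒟 → 𝒞 ⋈ 𝒟`, `d ↦ (d, id_{source d})`. -/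
def iotaD (M : MatchedPair V C D) {m y : V} (d : D.Hom m y) : M.ZSHom m y := ⟨m, (d, C.id m)⟩

/-- Extensionality for `ZSHom`. -/
theorem zs_ext {M : MatchedPair V C D} {z y : V} {f g : M.ZSHom z y}
    (h1 : f.1 = g.1) (hd : HEq f.2.1 g.2.1) (hc : HEq f.2.2 g.2.2) : f = g := by
  obtain ⟨m, d, c⟩ := f
  obtain ⟨m', d', c'⟩ := g
  dsimp at h1 hd hc
  subst h1
  rw [eq_of_heq hd, eq_of_heq hc]

/-- Congruence for composition over heterogeneous equalities of objects. -/
theorem hcomp (E : Category.{v} V) {a a' b b' c c' : V}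
    (ha : a = a') (hb : b = b') (hc : c = c')
    {f : E.Hom a b} {f' : E.Hom a' b'} {g : E.Hom b c} {g' : E.Hom b' c'}
    (hf : HEq f f') (hg : HEq g g') : HEq (E.comp f g) (E.comp f' g') := by
  subst ha hb hc
  rw [eq_of_heq hf, eq_of_heq hg]

end MatchedPair

/-- For a matched pair `(𝒞, 𝒟, ◁, ▷)` on object set `V`, the pairs `(d, c)`
form the morphisms of a category `𝒞 ⋈ 𝒟` with object set `V`: the composition
`(d₁, c₁) ∘ (d₂, c₂) = (d₁ ∘ (c₁ ◁ d₂), (c₁ ▷ d₂) ∘ c₂)` is associative and `(id_x, id_x)`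
is a two-sided identity at each `x`; moreover `ι_𝒞 : c ↦ (id_{range c}, c)` and
`ι_𝒟 : d ↦ (d, id_{source d})` are faithful identity-on-objects functors into `𝒞 ⋈ 𝒟`. -/
theorem zappaSzep_category_and_faithful_embeddings
    (V : Type u) (C D : Category.{v} V) (M : MatchedPair V C D) :
    -- associativity of composition
    (∀ {x z m y : V} (f : M.ZSHom m y) (g : M.ZSHom z m) (h : M.ZSHom x z),
        M.zsComp (M.zsComp f g) h = M.zsComp f (M.zsComp g h)) ∧
    -- `(id_x, id_x)` is a two-sided identity
    (∀ {z y : V} (f : M.ZSHom z y), M.zsComp (M.zsId y) f = f) ∧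
    (∀ {z y : V} (f : M.ZSHom z y), M.zsComp f (M.zsId z) = f) ∧
    -- `ι_𝒞` preserves identities and composition, and is injective on hom-sets
    (∀ x : V, M.iotaC (C.id x) = M.zsId x) ∧
    (∀ {z m y : V} (c₁ : C.Hom m y) (c₂ : C.Hom z m),
        M.iotaC (C.comp c₂ c₁) = M.zsComp (M.iotaC c₁) (M.iotaC c₂)) ∧
    (∀ z m : V, Function.Injective (M.iotaC : C.Hom z m → M.ZSHom z m)) ∧
    -- `ι_𝒟` preserves identities and composition, and is injective on hom-sets
    (∀ x : V, M.iotaD (D.id x) = M.zsId x) ∧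
    (∀ {z m y : V} (d₁ : D.Hom m y) (d₂ : D.Hom z m),
        M.iotaD (D.comp d₂ d₁) = M.zsComp (M.iotaD d₁) (M.iotaD d₂)) ∧
    (∀ z m : V, Function.Injective (M.iotaD : D.Hom z m → M.ZSHom z m)) := by
  refine ⟨?_, ?_, ?_, ?_, ?_, ?_, ?_, ?_, ?_⟩
  · -- associativity
    intro x z m y f g h
    obtain ⟨mf, d₁, c₁⟩ := f
    obtain ⟨mg, d₂, c₂⟩ := g
    obtain ⟨mh, d₃, c₃⟩ := h
    have e1 := M.w_comp_left (M.ra c₁ d₂) c₂ d₃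
    have e2 := M.w_comp_right c₁ d₂ (M.la c₂ d₃)
    refine MatchedPair.zs_ext (e1.trans e2.symm) ?_ ?_
    · refine HEq.trans
        (MatchedPair.hcomp D e1 rfl rfl (M.la_comp_left (M.ra c₁ d₂) c₂ d₃) HEq.rfl) ?_
      refine HEq.symm (HEq.trans
        (MatchedPair.hcomp D e2 rfl rfl (M.la_comp_right c₁ d₂ (M.la c₂ d₃)) HEq.rfl) ?_)
      exact heq_of_eq (D.assoc _ _ _)
    · refine HEq.trans
        (MatchedPair.hcomp C rfl rfl e1 HEq.rfl (M.ra_comp_left (M.ra c₁ d₂) c₂ d₃)) ?_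
      refine HEq.trans (heq_of_eq (C.assoc _ _ _).symm) ?_
      exact HEq.symm
        (MatchedPair.hcomp C rfl rfl e2 HEq.rfl (M.ra_comp_right c₁ d₂ (M.la c₂ d₃)))
  · -- left identity
    intro z y f
    obtain ⟨m, d, c⟩ := f
    refine MatchedPair.zs_ext (M.w_id_left d) ?_ ?_
    · exact HEq.trans
        (MatchedPair.hcomp D (M.w_id_left d) rfl rfl (M.la_id_left d) HEq.rfl)
        (heq_of_eq (D.comp_id d))
    · exact HEq.trans
        (MatchedPair.hcomp C rfl rfl (M.w_id_left d) HEq.rfl (M.ra_id_left d))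
        (heq_of_eq (C.comp_id c))
  · -- right identity
    intro z y f
    obtain ⟨m, d, c⟩ := f
    refine MatchedPair.zs_ext (M.w_id_right c) ?_ ?_
    · exact HEq.trans
        (MatchedPair.hcomp D (M.w_id_right c) rfl rfl (M.la_id_right c) HEq.rfl)
        (heq_of_eq (D.id_comp d))
    · exact HEq.trans
        (MatchedPair.hcomp C rfl rfl (M.w_id_right c) HEq.rfl (M.ra_id_right c))
        (heq_of_eq (C.id_comp c))
  · -- iotaC preserves identities
    intro x; rfl
  · -- iotaC preserves composition
    intro z m y c₁ c₂
    refine (MatchedPair.zs_ext (M.w_id_right c₁) ?_ ?_).symm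
    · exact HEq.trans
        (MatchedPair.hcomp D (M.w_id_right c₁) rfl rfl (M.la_id_right c₁) HEq.rfl)
        (heq_of_eq (D.id_comp (D.id y)))
    · exact MatchedPair.hcomp C rfl rfl (M.w_id_right c₁) HEq.rfl (M.ra_id_right c₁)
  · -- iotaC injective
    intro z m a b h
    injection h with h1 h2
    have := h2
    exact ((Prod.mk.injEq _ _ _ _).mp this).2
  · -- iotaD preserves identities
    intro x; rfl
  · -- iotaD preserves composition
    intro z m y d₁ d₂
    refine (MatchedPair.zs_ext (M.w_id_left d₂) ?_ ?_).symm
    · exact MatchedPair.hcomp D (M.w_id_left d₂) rfl rfl (M.la_id_left d₂) HEq.rfl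
    · exact HEq.trans
        (MatchedPair.hcomp C rfl rfl (M.w_id_left d₂) HEq.rfl (M.ra_id_left d₂))
        (heq_of_eq (C.id_comp (C.id z)))
  · -- iotaD injective
    intro z m a b h
    injection h with h1 h2
    have := h2
    exact ((Prod.mk.injEq _ _ _ _).mp this).1
end

section
/- Let (𝒞, 𝒟, ◁, ▷) and (𝒞', 𝒟', ◁', ▷') be matched pairs. If (h^L, h^R) : (𝒞, 𝒟) → (𝒞', 𝒟') is a matched-pair morphism, then there is a (unique) functor h : 𝒞 ⋈ 𝒟 ⥤ 𝒞' ⋈ 𝒟' satisfying h(d, c) = (h^R(d), h^L(c)) for all morphisms (d, c) of 𝒞 ⋈ 𝒟; it satisfies h ∘ ι_𝒞 = ι_{𝒞'} ∘ h^L and h ∘ ι_𝒟 = ι_{𝒟'} ∘ h^R. Conversely, if h : 𝒞 ⋈ 𝒟 ⥤ 𝒞' ⋈ 𝒟' is a functor mapping the image of ι_𝒞 into the image of ι_{𝒞'} and the image of ι_𝒟 into the image of ι_{𝒟'}, then the induced restrictions (h|_𝒞, h|_𝒟) form a matched-pair morphism (𝒞, 𝒟) → (𝒞', 𝒟'). 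-/
open CategoryTheory

universe v u

universe v' u'

/-- A matched-pair morphism `(f^L, f^R) : (𝒞, 𝒟, ◁, ▷) → (𝒞', 𝒟', ◁', ▷')` over a common
object map `o`: a pair of identity-on-objects-compatible functors intertwining the actions. -/
structure MPHom {V : Type u} {C D : Category.{v} V} {V' : Type u'} {C' D' : Category.{v'} V'}
    (M : MatchedPair V C D) (M' : MatchedPair V' C' D') (o : V → V') where
  mapL : ∀ {z m : V}, C.Hom z m → C'.Hom (o z) (o m)
  mapR : ∀ {z m : V}, D.Hom z m → D'.Hom (o z) (o m)
  mapL_id : ∀ x : V, mapL (C.id x) = C'.id (o x)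
  mapL_comp : ∀ {z m y : V} (c₁ : C.Hom m y) (c₂ : C.Hom z m),
      mapL (C.comp c₂ c₁) = C'.comp (mapL c₂) (mapL c₁)
  mapR_id : ∀ x : V, mapR (D.id x) = D'.id (o x)
  mapR_comp : ∀ {z m y : V} (d₁ : D.Hom m y) (d₂ : D.Hom z m),
      mapR (D.comp d₂ d₁) = D'.comp (mapR d₂) (mapR d₁)
  w_compat : ∀ {z m y : V} (c : C.Hom m y) (d : D.Hom z m),
      o (M.w c d) = M'.w (mapL c) (mapR d)
  la_compat : ∀ {z m y : V} (c : C.Hom m y) (d : D.Hom z m),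
      HEq (mapR (M.la c d)) (M'.la (mapL c) (mapR d))
  ra_compat : ∀ {z m y : V} (c : C.Hom m y) (d : D.Hom z m),
      HEq (mapL (M.ra c d)) (M'.ra (mapL c) (mapR d))

section Aux

variable {V : Type u} {C D : Category.{v} V}

/-- Extensionality for morphisms of the Zappa–Szép product. -/
theorem MatchedPair.zs_ext_s3 (M : MatchedPair V C D) {z y m m' : V}
    {d : D.Hom m y} {d' : D.Hom m' y} {c : C.Hom z m} {c' : C.Hom z m'}
    (hm : m = m') (hd : HEq d d') (hc : HEq c c') :
    (⟨m, (d, c)⟩ : M.ZSHom z y) = ⟨m', (d', c')⟩ := by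
  subst hm
  rw [eq_of_heq hd, eq_of_heq hc]

/-- Injectivity for morphisms of the Zappa–Szép product. -/
theorem MatchedPair.zs_inj (M : MatchedPair V C D) {z y m m' : V}
    {d : D.Hom m y} {d' : D.Hom m' y} {c : C.Hom z m} {c' : C.Hom z m'}
    (h : (⟨m, (d, c)⟩ : M.ZSHom z y) = ⟨m', (d', c')⟩) :
    m = m' ∧ HEq d d' ∧ HEq c c' := by
  obtain ⟨h1, h2⟩ := Sigma.ext_iff.mp h
  have h1' : m = m' := h1
  subst h1'
  have h2' : (d, c) = (d', c') := eq_of_heq h2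
  exact ⟨rfl, heq_of_eq (congrArg Prod.fst h2'), heq_of_eq (congrArg Prod.snd h2')⟩

/-- Heterogeneous congruence for composition. -/
theorem comp_congr_heq {W : Type u'} (E : Category.{v'} W) {a a' b b' k k' : W}
    (ha : a = a') (hb : b = b') (hk : k = k')
    {f : E.Hom a b} {f' : E.Hom a' b'} {g : E.Hom b k} {g' : E.Hom b' k'}
    (hf : HEq f f') (hg : HEq g g') : HEq (E.comp f g) (E.comp f' g') := by
  subst ha; subst hb; subst hk
  rw [eq_of_heq hf, eq_of_heq hg]

/-- `ι_𝒟(d) ∘ ι_𝒞(c) = (d, c)`. -/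
theorem MatchedPair.zsComp_iotaD_iotaC (M : MatchedPair V C D) {z m y : V}
    (d : D.Hom m y) (c : C.Hom z m) :
    M.zsComp (M.iotaD d) (M.iotaC c) = ⟨m, (d, c)⟩ :=
  M.zs_ext_s3 (M.w_id_left (D.id m))
    ((comp_congr_heq D (M.w_id_left (D.id m)) rfl rfl (M.la_id_left (D.id m)) HEq.rfl).trans
      (heq_of_eq (D.id_comp d)))
    ((comp_congr_heq C rfl rfl (M.w_id_left (D.id m)) HEq.rfl (M.ra_id_left (D.id m))).trans
      (heq_of_eq (C.comp_id c)))

/-- `ι_𝒞(c) ∘ ι_𝒟(d) = (c ◁ d, c ▷ d)`. -/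
theorem MatchedPair.zsComp_iotaC_iotaD (M : MatchedPair V C D) {z m y : V}
    (c : C.Hom m y) (d : D.Hom z m) :
    M.zsComp (M.iotaC c) (M.iotaD d) = ⟨M.w c d, (M.la c d, M.ra c d)⟩ :=
  M.zs_ext_s3 rfl (heq_of_eq (D.comp_id _)) (heq_of_eq (C.id_comp _))

/-- `ι_𝒞` is functorial. -/
theorem MatchedPair.zsComp_iotaC_iotaC (M : MatchedPair V C D) {z m y : V}
    (c₁ : C.Hom m y) (c₂ : C.Hom z m) :
    M.zsComp (M.iotaC c₁) (M.iotaC c₂) = M.iotaC (C.comp c₂ c₁) :=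
  M.zs_ext_s3 (M.w_id_right c₁)
    ((comp_congr_heq D (M.w_id_right c₁) rfl rfl (M.la_id_right c₁) HEq.rfl).trans
      (heq_of_eq (D.comp_id _)))
    (comp_congr_heq C rfl rfl (M.w_id_right c₁) HEq.rfl (M.ra_id_right c₁))

/-- `ι_𝒟` is functorial. -/
theorem MatchedPair.zsComp_iotaD_iotaD (M : MatchedPair V C D) {z m y : V}
    (d₁ : D.Hom m y) (d₂ : D.Hom z m) :
    M.zsComp (M.iotaD d₁) (M.iotaD d₂) = M.iotaD (D.comp d₂ d₁) :=
  M.zs_ext_s3 (M.w_id_left d₂)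
    (comp_congr_heq D (M.w_id_left d₂) rfl rfl (M.la_id_left d₂) HEq.rfl)
    ((comp_congr_heq C rfl rfl (M.w_id_left d₂) HEq.rfl (M.ra_id_left d₂)).trans
      (heq_of_eq (C.comp_id _)))

end Aux

/-- A matched-pair morphism `(h^L, h^R)` induces a unique functor
`h : 𝒞 ⋈ 𝒟 ⥤ 𝒞' ⋈ 𝒟'` with `h(d, c) = (h^R(d), h^L(c))`, and this functor satisfies
`h ∘ ι_𝒞 = ι_{𝒞'} ∘ h^L` and `h ∘ ι_𝒟 = ι_{𝒟'} ∘ h^R`.  Conversely, a functor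
`𝒞 ⋈ 𝒟 ⥤ 𝒞' ⋈ 𝒟'` mapping the image of `ι_𝒞` into the image of `ι_{𝒞'}` and the image
of `ι_𝒟` into the image of `ι_{𝒟'}` restricts to a matched-pair morphism. -/
theorem zappaSzep_functorial
    (V : Type u) (C D : Category.{v} V) (M : MatchedPair V C D)
    (V' : Type u') (C' D' : Category.{v'} V') (M' : MatchedPair V' C' D') :
    -- forward direction
    (∀ (o : V → V') (P : MPHom M M' o),
      (∃! H : ∀ (z y : V), M.ZSHom z y → M'.ZSHom (o z) (o y),
        (∀ x : V, H x x (M.zsId x) = M'.zsId (o x)) ∧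
        (∀ {z m y : V} (f : M.ZSHom m y) (g : M.ZSHom z m),
            H z y (M.zsComp f g) = M'.zsComp (H m y f) (H z m g)) ∧
        (∀ {z m y : V} (d : D.Hom m y) (c : C.Hom z m),
            H z y ⟨m, (d, c)⟩ = ⟨o m, (P.mapR d, P.mapL c)⟩)) ∧
      (∀ H : ∀ (z y : V), M.ZSHom z y → M'.ZSHom (o z) (o y),
        ((∀ x : V, H x x (M.zsId x) = M'.zsId (o x)) ∧
         (∀ {z m y : V} (f : M.ZSHom m y) (g : M.ZSHom z m),
            H z y (M.zsComp f g) = M'.zsComp (H m y f) (H z m g)) ∧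
         (∀ {z m y : V} (d : D.Hom m y) (c : C.Hom z m),
            H z y ⟨m, (d, c)⟩ = ⟨o m, (P.mapR d, P.mapL c)⟩)) →
        (∀ {z m : V} (c : C.Hom z m), H z m (M.iotaC c) = M'.iotaC (P.mapL c)) ∧
        (∀ {z m : V} (d : D.Hom z m), H z m (M.iotaD d) = M'.iotaD (P.mapR d)))) ∧
    -- converse direction
    (∀ (o : V → V') (H : ∀ (z y : V), M.ZSHom z y → M'.ZSHom (o z) (o y)),
      (∀ x : V, H x x (M.zsId x) = M'.zsId (o x)) →
      (∀ {z m y : V} (f : M.ZSHom m y) (g : M.ZSHom z m),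
          H z y (M.zsComp f g) = M'.zsComp (H m y f) (H z m g)) →
      (∀ {z m : V} (c : C.Hom z m), ∃ c' : C'.Hom (o z) (o m),
          H z m (M.iotaC c) = M'.iotaC c') →
      (∀ {z m : V} (d : D.Hom z m), ∃ d' : D'.Hom (o z) (o m),
          H z m (M.iotaD d) = M'.iotaD d') →
      ∃ P : MPHom M M' o,
        (∀ {z m : V} (c : C.Hom z m), H z m (M.iotaC c) = M'.iotaC (P.mapL c)) ∧
        (∀ {z m : V} (d : D.Hom z m), H z m (M.iotaD d) = M'.iotaD (P.mapR d))) := by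
  constructor
  · -- forward direction
    intro o P
    constructor
    · refine ⟨fun z y f => ⟨o f.1, (P.mapR f.2.1, P.mapL f.2.2)⟩, ⟨?_, ?_, ?_⟩, ?_⟩
      · intro x
        exact M'.zs_ext_s3 rfl (heq_of_eq (P.mapR_id x)) (heq_of_eq (P.mapL_id x))
      · intro z m y f g
        show (⟨o (M.zsComp f g).1, (P.mapR (M.zsComp f g).2.1, P.mapL (M.zsComp f g).2.2)⟩ :
          M'.ZSHom (o z) (o y)) = _
        simp only [MatchedPair.zsComp]
        refine M'.zs_ext_s3 (P.w_compat f.2.2 g.2.1) ?_ ?_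
        · rw [P.mapR_comp]
          exact comp_congr_heq D' (P.w_compat f.2.2 g.2.1) rfl rfl
            (P.la_compat f.2.2 g.2.1) HEq.rfl
        · rw [P.mapL_comp]
          exact comp_congr_heq C' rfl rfl (P.w_compat f.2.2 g.2.1) HEq.rfl
            (P.ra_compat f.2.2 g.2.1)
      · intro z m y d c; rfl
      · rintro H' ⟨-, -, h3⟩
        funext z y f
        obtain ⟨m, d, c⟩ := f
        exact h3 d c
    · rintro H ⟨-, -, h3⟩
      constructor
      · intro z m c
        exact (h3 (D.id m) c).trans
          (M'.zs_ext_s3 rfl (heq_of_eq (P.mapR_id m)) HEq.rfl)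
      · intro z m d
        exact (h3 d (C.id z)).trans
          (M'.zs_ext_s3 rfl HEq.rfl (heq_of_eq (P.mapL_id z)))
  · -- converse direction
    intro o H hid hcomp hC hD
    have injC : ∀ {z m : V'} {c c' : C'.Hom z m}, M'.iotaC c = M'.iotaC c' → c = c' :=
      fun h => eq_of_heq (M'.zs_inj h).2.2
    have injD : ∀ {z m : V'} {d d' : D'.Hom z m}, M'.iotaD d = M'.iotaD d' → d = d' :=
      fun h => eq_of_heq (M'.zs_inj h).2.1
    let mapL : ∀ {z m : V}, C.Hom z m → C'.Hom (o z) (o m) := fun c => (hC c).choose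
    have hLspec : ∀ {z m : V} (c : C.Hom z m), H z m (M.iotaC c) = M'.iotaC (mapL c) :=
      fun c => (hC c).choose_spec
    let mapR : ∀ {z m : V}, D.Hom z m → D'.Hom (o z) (o m) := fun d => (hD d).choose
    have hRspec : ∀ {z m : V} (d : D.Hom z m), H z m (M.iotaD d) = M'.iotaD (mapR d) :=
      fun d => (hD d).choose_spec
    have hgen : ∀ {z m y : V} (d : D.Hom m y) (c : C.Hom z m),
        H z y ⟨m, (d, c)⟩ = ⟨o m, (mapR d, mapL c)⟩ := by
      intro z m y d c
      have h1 := hcomp (M.iotaD d) (M.iotaC c)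
      rw [M.zsComp_iotaD_iotaC d c] at h1
      rw [h1, hLspec c, hRspec d]
      exact M'.zsComp_iotaD_iotaC _ _
    have hmix : ∀ {z m y : V} (c : C.Hom m y) (d : D.Hom z m),
        (⟨o (M.w c d), (mapR (M.la c d), mapL (M.ra c d))⟩ : M'.ZSHom (o z) (o y))
          = ⟨M'.w (mapL c) (mapR d), (M'.la (mapL c) (mapR d), M'.ra (mapL c) (mapR d))⟩ := by
      intro z m y c d
      have h1 := hcomp (M.iotaC c) (M.iotaD d)
      rw [M.zsComp_iotaC_iotaD c d, hLspec c, hRspec d, M'.zsComp_iotaC_iotaD] at h1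
      rw [← h1]
      exact (hgen (M.la c d) (M.ra c d)).symm
    refine ⟨⟨@mapL, @mapR, ?_, ?_, ?_, ?_, ?_, ?_, ?_⟩,
      fun c => hLspec c, fun d => hRspec d⟩
    · intro x
      apply injC
      rw [← hLspec (C.id x)]
      have hx : M.iotaC (C.id x) = M.zsId x := rfl
      rw [hx, hid x]
      rfl
    · intro z m y c₁ c₂
      apply injC
      rw [← hLspec (C.comp c₂ c₁), ← M.zsComp_iotaC_iotaC c₁ c₂, hcomp,
        hLspec c₁, hLspec c₂, M'.zsComp_iotaC_iotaC]
    · intro x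
      apply injD
      rw [← hRspec (D.id x)]
      have hx : M.iotaD (D.id x) = M.zsId x := rfl
      rw [hx, hid x]
      rfl
    · intro z m y d₁ d₂
      apply injD
      rw [← hRspec (D.comp d₂ d₁), ← M.zsComp_iotaD_iotaD d₁ d₂, hcomp,
        hRspec d₁, hRspec d₂, M'.zsComp_iotaD_iotaD]
    · intro z m y c d
      exact (M'.zs_inj (hmix c d)).1
    · intro z m y c d
      exact (M'.zs_inj (hmix c d)).2.1
    · intro z m y c d
      exact (M'.zs_inj (hmix c d)).2.2
end

section
/- Let (𝒞, 𝒟, ◁, ▷) be a matched pair. Suppose that 𝒞 and 𝒟 are left cancellative, i.e. in each of them f ∘ g = f ∘ h implies g = h, and that for each 𝒞-morphism c : m ⟶ y the left action of c is injective: if d₁, d₂ are 𝒟-morphisms with range m and (w(c,d₁), c ◁ d₁) = (w(c,d₂), c ◁ d₂), then d₁ = d₂. Then the Zappa–Szép product 𝒞 ⋈ 𝒟 is left cancellative: for morphisms ζ, η₁, η₂ of 𝒞 ⋈ 𝒟 with ζ ∘ η₁ and ζ ∘ η₂ defined, ζ ∘ η₁ = ζ ∘ η₂ implies η₁ = η₂.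 -/
open CategoryTheory

universe v u

private theorem ZS.pair_split {V : Type u} {C D : Category.{v} V}
    {z y : V} {A₁ A₂ : V} (hA : A₁ = A₂)
    {p₁ : Prod (D.Hom A₁ y) (C.Hom z A₁)} {p₂ : Prod (D.Hom A₂ y) (C.Hom z A₂)}
    (h : HEq p₁ p₂) : HEq p₁.1 p₂.1 ∧ HEq p₁.2 p₂.2 := by
  subst hA; cases eq_of_heq h; exact ⟨HEq.rfl, HEq.rfl⟩

private theorem ZS.heq_cancel_D {V : Type u} {D : Category.{v} V}
    {A₁ A₂ m' y : V} (hA : A₁ = A₂)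
    (hD : ∀ {z m y : V} (f : D.Hom m y) (g h : D.Hom z m),
        D.comp g f = D.comp h f → g = h)
    (d : D.Hom m' y) (l₁ : D.Hom A₁ m') (l₂ : D.Hom A₂ m')
    (h : HEq (D.comp l₁ d) (D.comp l₂ d)) : HEq l₁ l₂ := by
  subst hA; exact heq_of_eq (hD d l₁ l₂ (eq_of_heq h))

/-- If `𝒞` and `𝒟` are left cancellative and for each `𝒞`-morphism `c` the
left action `d ↦ (w(c,d), c ◁ d)` is injective, then the Zappa–Szép product `𝒞 ⋈ 𝒟` is left
cancellative. -/
theorem zappaSzep_leftCancellative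
    (V : Type u) (C D : Category.{v} V) (M : MatchedPair V C D)
    -- `𝒞` is left cancellative: `f ∘ g = f ∘ h` implies `g = h`
    (hC : ∀ {z m y : V} (f : C.Hom m y) (g h : C.Hom z m),
        C.comp g f = C.comp h f → g = h)
    -- `𝒟` is left cancellative
    (hD : ∀ {z m y : V} (f : D.Hom m y) (g h : D.Hom z m),
        D.comp g f = D.comp h f → g = h)
    -- for each `𝒞`-morphism `c : m ⟶ y`, the left action of `c` is injective
    (hinj : ∀ {m y : V} (c : C.Hom m y),
        Function.Injective (fun p : Σ z : V, D.Hom z m =>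
          (⟨M.w c p.2, M.la c p.2⟩ : Σ w' : V, D.Hom w' y))) :
    ∀ {z m y : V} (ζ : M.ZSHom m y) (η₁ η₂ : M.ZSHom z m),
      M.zsComp ζ η₁ = M.zsComp ζ η₂ → η₁ = η₂ := by
  intro z m y ζ η₁ η₂ h
  obtain ⟨m', d, c⟩ := ζ
  obtain ⟨m₁, d₁, c₁⟩ := η₁
  obtain ⟨m₂, d₂, c₂⟩ := η₂
  unfold MatchedPair.zsComp at h
  dsimp at h
  obtain ⟨hw, hpair⟩ := Sigma.mk.inj_iff.mp h
  obtain ⟨h1, h2⟩ := ZS.pair_split hw hpair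
  dsimp at h1 h2
  have hla : HEq (M.la c d₁) (M.la c d₂) := ZS.heq_cancel_D hw @hD d _ _ h1
  have hsig : (⟨M.w c d₁, M.la c d₁⟩ : Σ w', D.Hom w' m') = ⟨M.w c d₂, M.la c d₂⟩ :=
    Sigma.ext hw hla
  have hd : (⟨m₁, d₁⟩ : Σ z', D.Hom z' m) = ⟨m₂, d₂⟩ := hinj c hsig
  obtain ⟨hm, hd'⟩ := Sigma.mk.inj_iff.mp hd
  subst hm
  cases eq_of_heq hd'
  have hc : c₁ = c₂ := hC (M.ra c d₁) c₁ c₂ (eq_of_heq h2)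
  subst hc
  rfl
end

section
/- Fix k₁, k₂ ∈ ℕ and let Σ be a (k₁+k₂)-graph with degree map d (identifying ℕ^{k₁+k₂} with ℕ^{k₁} × ℕ^{k₂}). Let Λ be the class of morphisms of Σ with degree in ℕ^{k₁} × {0} and Γ the class of morphisms with degree in {0} × ℕ^{k₂}. Then: Λ and Γ are wide subcategories of Σ (contain all identities and are closed under composition), and with the evident degree maps Λ is a k₁-graph and Γ is a k₂-graph; there are unique maps ◁ and ▷, assigning to each composable pair (λ, γ) ∈ Λ × Γ with source(λ) = range(γ) elements λ ◁ γ ∈ Γ and λ ▷ γ ∈ Λ with λ ∘ γ = (λ ◁ γ) ∘ (λ ▷ γ) in Σ; these maps form a matched pair structure on (Λ, Γ); the functor (γ, λ) ↦ γ ∘ λ is an isomorphism of categories Λ ⋈ Γ ≅ Σ; and d(λ ◁ γ) = d(γ) and d(λ ▷ γ) = d(λ) for all such pairs. -/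
open CategoryTheory

universe v u

universe w

/-- `deg` makes the category `cV` a (generalised) higher-rank graph with degrees in the
additive commutative monoid `N`: `deg` is functorial and satisfies the unique factorisation
property.  (For `N = ℕ^k` this is the definition of a `k`-graph; in the factorisation
`f = μ ∘ ν`, the morphism `ν` is applied first.) -/
def IsKGraphDeg (V : Type u) (cV : Category.{v} V) {N : Type w} [AddCommMonoid N]
    (deg : ∀ ⦃x y : V⦄, cV.Hom x y → N) : Prop :=
  (∀ x : V, deg (cV.id x) = 0) ∧
  (∀ {x y z : V} (f : cV.Hom x y) (g : cV.Hom y z), deg (cV.comp f g) = deg f + deg g) ∧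
  (∀ {x y : V} (f : cV.Hom x y) (m n : N), deg f = m + n →
    ∃! p : Σ z : V, cV.Hom x z × cV.Hom z y,
      deg p.2.1 = n ∧ deg p.2.2 = m ∧ cV.comp p.2.1 p.2.2 = f)

/-- The wide subcategory of `cE` on a class of morphisms containing identities and closed
under composition. -/
@[reducible]
def wideSubcat (E : Type u) (cE : Category.{v} E) (W : ∀ x y : E, Set (cE.Hom x y))
    (hid : ∀ x : E, cE.id x ∈ W x x)
    (hcomp : ∀ {x y z : E} (f : cE.Hom x y) (g : cE.Hom y z),
      f ∈ W x y → g ∈ W y z → cE.comp f g ∈ W x z) :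
    Category.{v} E where
  Hom x y := {f : cE.Hom x y // f ∈ W x y}
  id x := ⟨cE.id x, hid x⟩
  comp f g := ⟨cE.comp f.1 g.1, hcomp f.1 g.1 f.2 g.2⟩
  id_comp f := Subtype.ext (cE.id_comp f.1)
  comp_id f := Subtype.ext (cE.comp_id f.1)
  assoc f g h := Subtype.ext (cE.assoc f.1 g.1 h.1)

/-! Splitting degrees as `ℕ^{k₁+k₂} = ℕ^{k₁} × ℕ^{k₂}`, unique factorisation in `Σ` says that
every morphism is `γ ∘ λ` for a unique pair `λ ∈ Λ`, `γ ∈ Γ`, i.e. that `(γ, λ) ↦ γ ∘ λ` is a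
bijection. Any two wide subcategories with this property form a matched pair: `λ ◁ γ` and
`λ ▷ γ` are the two factors of `λ ∘ γ`, and every matched-pair axiom holds because both of its
sides are factorisations of one and the same morphism. Degrees are preserved because `d` is
additive and the two factors have degrees in complementary summands. -/

section ZappaSzep

variable {V : Type u} {cV : Category.{v} V}
  {WL : ∀ x y : V, Set (cV.Hom x y)} {hidL : ∀ x : V, cV.id x ∈ WL x x}
  {hcompL : ∀ {x y z : V} (f : cV.Hom x y) (g : cV.Hom y z),
    f ∈ WL x y → g ∈ WL y z → cV.comp f g ∈ WL x z}
  {WG : ∀ x y : V, Set (cV.Hom x y)} {hidG : ∀ x : V, cV.id x ∈ WG x x}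
  {hcompG : ∀ {x y z : V} (f : cV.Hom x y) (g : cV.Hom y z),
    f ∈ WG x y → g ∈ WG y z → cV.comp f g ∈ WG x z}

local notation "Λ" => wideSubcat V cV WL hidL @hcompL
local notation "Γ" => wideSubcat V cV WG hidG @hcompG

def factorComp {z y : V} (p : Σ m : V, (Γ).Hom m y × (Λ).Hom z m) : cV.Hom z y :=
  cV.comp p.2.2.val p.2.1.val

variable (hidL hcompL hidG hcompG) in
def UniqueFactorization : Prop :=
  ∀ z y : V, Function.Bijective (factorComp : (Σ m : V, (Γ).Hom m y × (Λ).Hom z m) → cV.Hom z y)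

namespace UniqueFactorization

variable (hfac : UniqueFactorization hidL @hcompL hidG @hcompG)

noncomputable def factorize {z y : V} (f : cV.Hom z y) : Σ m : V, (Γ).Hom m y × (Λ).Hom z m :=
  Function.surjInv (hfac z y).2 f

theorem factorComp_factorize {z y : V} (f : cV.Hom z y) : factorComp (hfac.factorize f) = f :=
  Function.surjInv_eq (hfac z y).2 f

theorem factorize_eq {z y : V} {f : cV.Hom z y} {p : Σ m : V, (Γ).Hom m y × (Λ).Hom z m}
    (h : factorComp p = f) : hfac.factorize f = p :=
  (hfac z y).1 (by rw [factorComp_factorize, h])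

noncomputable def act {z m y : V} (c : (Λ).Hom m y) (d : (Γ).Hom z m) :
    Σ w : V, (Γ).Hom w y × (Λ).Hom z w :=
  hfac.factorize (cV.comp d.val c.val)

theorem act_spec {z m y : V} (c : (Λ).Hom m y) (d : (Γ).Hom z m) :
    cV.comp (hfac.act c d).2.2.val (hfac.act c d).2.1.val = cV.comp d.val c.val :=
  hfac.factorComp_factorize _

theorem act_id_left {z m : V} (d : (Γ).Hom z m) :
    hfac.act ((Λ).id m) d = ⟨z, (d, (Λ).id z)⟩ :=
  hfac.factorize_eq ((cV.id_comp _).trans (cV.comp_id _).symm)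

theorem act_id_right {m y : V} (c : (Λ).Hom m y) :
    hfac.act c ((Γ).id m) = ⟨y, ((Γ).id y, c)⟩ :=
  hfac.factorize_eq ((cV.comp_id _).trans (cV.id_comp _).symm)

theorem act_comp_left {z m k y : V} (c₁ : (Λ).Hom k y) (c₂ : (Λ).Hom m k) (d : (Γ).Hom z m) :
    hfac.act ((Λ).comp c₂ c₁) d =
      ⟨(hfac.act c₁ (hfac.act c₂ d).2.1).1, ((hfac.act c₁ (hfac.act c₂ d).2.1).2.1,
        (Λ).comp (hfac.act c₂ d).2.2 (hfac.act c₁ (hfac.act c₂ d).2.1).2.2)⟩ := by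
  refine hfac.factorize_eq ?_
  change cV.comp (cV.comp _ _) _ = cV.comp _ (cV.comp _ _)
  rw [cV.assoc, act_spec, ← cV.assoc, act_spec, cV.assoc]

theorem act_comp_right {z k m y : V} (c : (Λ).Hom m y) (d₁ : (Γ).Hom k m) (d₂ : (Γ).Hom z k) :
    hfac.act c ((Γ).comp d₂ d₁) =
      ⟨(hfac.act (hfac.act c d₁).2.2 d₂).1,
        ((Γ).comp (hfac.act (hfac.act c d₁).2.2 d₂).2.1 (hfac.act c d₁).2.1,
          (hfac.act (hfac.act c d₁).2.2 d₂).2.2)⟩ := by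
  refine hfac.factorize_eq ?_
  change cV.comp _ (cV.comp _ _) = cV.comp (cV.comp _ _) _
  rw [← cV.assoc, act_spec, cV.assoc, act_spec, ← cV.assoc]

theorem existsUnique_act (hfac : UniqueFactorization hidL @hcompL hidG @hcompG) :
    ∃! F : ∀ (z m y : V), (Λ).Hom m y → (Γ).Hom z m → Σ w : V, (Γ).Hom w y × (Λ).Hom z w,
      ∀ (z m y : V) (c : (Λ).Hom m y) (d : (Γ).Hom z m),
        cV.comp d.val c.val = cV.comp (F z m y c d).2.2.val (F z m y c d).2.1.val :=
  ⟨fun _ _ _ => hfac.act, fun _ _ _ c d => (hfac.act_spec c d).symm, fun _ hF =>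
    funext fun _ => funext fun _ => funext fun _ => funext fun c => funext fun d =>
      (hfac.factorize_eq (hF _ _ _ c d).symm).symm⟩

noncomputable def matchedPair : MatchedPair V Λ Γ where
  w c d := (hfac.act c d).1
  la c d := (hfac.act c d).2.1
  ra c d := (hfac.act c d).2.2
  w_id_left d := by rw [act_id_left]
  la_id_left d := by rw [act_id_left]
  ra_id_left d := by rw [act_id_left]
  w_id_right c := by rw [act_id_right]
  la_id_right c := by rw [act_id_right]
  ra_id_right c := by rw [act_id_right]
  w_comp_left c₁ c₂ d := by rw [act_comp_left]
  la_comp_left c₁ c₂ d := by rw [act_comp_left]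
  ra_comp_left c₁ c₂ d := by rw [act_comp_left]
  w_comp_right c d₁ d₂ := by rw [act_comp_right]
  la_comp_right c d₁ d₂ := by rw [act_comp_right]
  ra_comp_right c d₁ d₂ := by rw [act_comp_right]

theorem matchedPair_ra_comp_la {z m y : V} (c : (Λ).Hom m y) (d : (Γ).Hom z m) :
    cV.comp (hfac.matchedPair.ra c d).val (hfac.matchedPair.la c d).val = cV.comp d.val c.val :=
  hfac.act_spec c d

theorem matchedPair_comp_zsComp {z m y : V} (f : hfac.matchedPair.ZSHom m y)
    (g : hfac.matchedPair.ZSHom z m) :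
    cV.comp (hfac.matchedPair.zsComp f g).2.2.val (hfac.matchedPair.zsComp f g).2.1.val =
      cV.comp (cV.comp g.2.2.val g.2.1.val) (cV.comp f.2.2.val f.2.1.val) := by
  have h := congrArg (cV.comp · f.2.1.val) (hfac.matchedPair_ra_comp_la f.2.2 g.2.1)
  simp only [Category.assoc] at h
  exact (cV.assoc _ _ _).trans ((congrArg (cV.comp g.2.2.val) h).trans (cV.assoc _ _ _).symm)

end UniqueFactorization

end ZappaSzep

namespace IsKGraphDeg

variable {V : Type u} {cV : Category.{v} V}

section Monoid

variable {N : Type w} [AddCommMonoid N] {deg : ∀ ⦃x y : V⦄, cV.Hom x y → N}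

theorem deg_id (hkg : IsKGraphDeg V cV deg) (x : V) : deg (cV.id x) = 0 :=
  hkg.1 x

theorem deg_comp (hkg : IsKGraphDeg V cV deg) {x y z : V} (f : cV.Hom x y) (g : cV.Hom y z) :
    deg (cV.comp f g) = deg f + deg g :=
  hkg.2.1 f g

theorem map_addEquiv {N' : Type*} [AddCommMonoid N'] (hkg : IsKGraphDeg V cV deg)
    (e : N ≃+ N') : IsKGraphDeg V cV (fun _ _ f => e (deg f)) := by
  refine ⟨fun x => by simp [hkg.deg_id], fun f g => by simp [hkg.deg_comp], fun f m n h => ?_⟩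
  simp only [← e.eq_symm_apply]
  exact hkg.2.2 f _ _ (by rw [← map_add, e.eq_symm_apply]; exact h)

end Monoid

variable {A B : Type*} [AddCommMonoid A] [AddCommMonoid B]
  {deg : ∀ ⦃x y : V⦄, cV.Hom x y → A × B}
  {hidL : ∀ x : V, cV.id x ∈ {f : cV.Hom x x | (deg f).2 = 0}}
  {hcompL : ∀ {x y z : V} (f : cV.Hom x y) (g : cV.Hom y z),
    f ∈ {f : cV.Hom x y | (deg f).2 = 0} → g ∈ {g : cV.Hom y z | (deg g).2 = 0} →
    cV.comp f g ∈ {h : cV.Hom x z | (deg h).2 = 0}}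
  {hidG : ∀ x : V, cV.id x ∈ {f : cV.Hom x x | (deg f).1 = 0}}
  {hcompG : ∀ {x y z : V} (f : cV.Hom x y) (g : cV.Hom y z),
    f ∈ {f : cV.Hom x y | (deg f).1 = 0} → g ∈ {g : cV.Hom y z | (deg g).1 = 0} →
    cV.comp f g ∈ {h : cV.Hom x z | (deg h).1 = 0}}

local notation "Λ" =>
  wideSubcat V cV (fun x y => Set.ofPred fun f : cV.Hom x y => Prod.snd (deg f) = 0) hidL @hcompL
local notation "Γ" =>
  wideSubcat V cV (fun x y => Set.ofPred fun f : cV.Hom x y => Prod.fst (deg f) = 0) hidG @hcompG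

variable (hidL hcompL) in
theorem restrict_fst (hkg : IsKGraphDeg V cV deg) :
    IsKGraphDeg V Λ (fun _ _ f => (deg f.val).1) := by
  refine ⟨fun x => congrArg Prod.fst (hkg.deg_id x),
    fun f g => congrArg Prod.fst (hkg.deg_comp f.val g.val), fun f m n h => ?_⟩
  obtain ⟨⟨w, c, d⟩, ⟨hc, hd, hcd⟩, huniq⟩ :=
    hkg.2.2 f.val (m, 0) (n, 0) (Prod.ext h (f.2.trans (add_zero 0).symm))
  refine ⟨⟨w, ⟨c, by simp [hc]⟩, ⟨d, by simp [hd]⟩⟩, ⟨by simp [hc], by simp [hd], Subtype.ext hcd⟩,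
    fun p ⟨hc', hd', hcd'⟩ => ?_⟩
  obtain ⟨rfl, h'⟩ := Sigma.mk.inj_iff.mp <| huniq ⟨p.1, p.2.1.val, p.2.2.val⟩
    ⟨Prod.ext hc' p.2.1.2, Prod.ext hd' p.2.2.2, congrArg Subtype.val hcd'⟩
  obtain ⟨hc'', hd''⟩ := Prod.mk.inj (eq_of_heq h')
  exact Sigma.ext rfl (heq_of_eq (Prod.ext (Subtype.ext hc'') (Subtype.ext hd'')))

variable (hidG hcompG) in
theorem restrict_snd (hkg : IsKGraphDeg V cV deg) :
    IsKGraphDeg V Γ (fun _ _ f => (deg f.val).2) :=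
  (hkg.map_addEquiv (AddEquiv.prodComm)).restrict_fst hidG @hcompG

theorem deg_eq_of_comp (hkg : IsKGraphDeg V cV deg) {x w y : V} {c : cV.Hom x w}
    {d : cV.Hom w y} (hc : (deg c).2 = 0) (hd : (deg d).1 = 0) :
    deg c = ((deg (cV.comp c d)).1, 0) ∧ deg d = (0, (deg (cV.comp c d)).2) := by
  rw [hkg.deg_comp]
  exact ⟨Prod.ext (by simp [hd]) hc, Prod.ext hd (by simp [hc])⟩

variable (hidL hcompL hidG hcompG) in
theorem uniqueFactorization (hkg : IsKGraphDeg V cV deg) :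
    UniqueFactorization hidL @hcompL hidG @hcompG := by
  intro z y
  have hsplit (f : cV.Hom z y) : deg f = (0, (deg f).2) + ((deg f).1, 0) := by simp
  refine ⟨fun p q hpq => ?_, fun f => ?_⟩
  · have hp := hkg.deg_eq_of_comp p.2.2.2 p.2.1.2
    have hq := hkg.deg_eq_of_comp q.2.2.2 q.2.1.2
    obtain ⟨m, d, c⟩ := p
    obtain ⟨m', d', c'⟩ := q
    obtain ⟨rfl, h⟩ := Sigma.mk.inj_iff.mp <|
      (hkg.2.2 _ _ _ (hsplit (factorComp ⟨m, d, c⟩))).unique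
        (y₁ := ⟨m, c.val, d.val⟩) (y₂ := ⟨m', c'.val, d'.val⟩) ⟨hp.1, hp.2, rfl⟩
        ⟨hpq ▸ hq.1, hpq ▸ hq.2, hpq.symm⟩
    obtain ⟨hc, hd⟩ := Prod.mk.inj (eq_of_heq h)
    exact Sigma.ext rfl (heq_of_eq (Prod.ext (Subtype.ext hd) (Subtype.ext hc)))
  · obtain ⟨⟨m, c, d⟩, ⟨hc, hd, hcd⟩, -⟩ := hkg.2.2 f _ _ (hsplit f)
    exact ⟨⟨m, ⟨d, by simp [hd]⟩, ⟨c, by simp [hc]⟩⟩, hcd⟩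

theorem deg_la_ra (hkg : IsKGraphDeg V cV deg)
    (hfac : UniqueFactorization hidL @hcompL hidG @hcompG) {z m y : V} (c : (Λ).Hom m y)
    (d : (Γ).Hom z m) :
    deg (hfac.matchedPair.la c d).val = deg d.val ∧
      deg (hfac.matchedPair.ra c d).val = deg c.val := by
  have hc : (deg c.val).2 = 0 := c.2
  have hd : (deg d.val).1 = 0 := d.2
  obtain ⟨hra, hla⟩ := hkg.deg_eq_of_comp (hfac.matchedPair.ra c d).2 (hfac.matchedPair.la c d).2
  rw [hfac.matchedPair_ra_comp_la, hkg.deg_comp] at hra hla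
  exact ⟨hla.trans (Prod.ext hd.symm (by simp [hc])), hra.trans (Prod.ext (by simp [hd]) hc.symm)⟩

end IsKGraphDeg

/-- **Statement 7.** Let `Σ` be a `(k₁+k₂)`-graph (degree map into `ℕ^{k₁} × ℕ^{k₂}`).
Then the classes `Λ` (degree in `ℕ^{k₁} × {0}`) and `Γ` (degree in `{0} × ℕ^{k₂}`) are wide
subcategories; `Λ` is a `k₁`-graph and `Γ` is a `k₂`-graph; there are unique actions
`◁`, `▷` with `λ ∘ γ = (λ ◁ γ) ∘ (λ ▷ γ)`; these form a matched pair; `(γ, λ) ↦ γ ∘ λ` is an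
isomorphism of categories `Λ ⋈ Γ ≅ Σ`; and `d(λ ◁ γ) = d(γ)`, `d(λ ▷ γ) = d(λ)`. -/
theorem kGraph_as_zappaSzep (k₁ k₂ : ℕ) (V : Type u) (cV : Category.{v} V)
    (deg : ∀ ⦃x y : V⦄, cV.Hom x y → (Fin k₁ → ℕ) × (Fin k₂ → ℕ))
    (hkg : IsKGraphDeg V cV deg) :
    -- `Λ` and `Γ` are wide subcategories:
    (∀ x : V, (deg (cV.id x)).2 = 0) ∧
    (∀ {x y z : V} (f : cV.Hom x y) (g : cV.Hom y z),
        (deg f).2 = 0 → (deg g).2 = 0 → (deg (cV.comp f g)).2 = 0) ∧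
    (∀ x : V, (deg (cV.id x)).1 = 0) ∧
    (∀ {x y z : V} (f : cV.Hom x y) (g : cV.Hom y z),
        (deg f).1 = 0 → (deg g).1 = 0 → (deg (cV.comp f g)).1 = 0) ∧
    -- and, regarding them as categories `cL` and `cG`:
    (∀ (hidL : ∀ x : V, cV.id x ∈ {f : cV.Hom x x | (deg f).2 = 0})
       (hcompL : ∀ {x y z : V} (f : cV.Hom x y) (g : cV.Hom y z),
          f ∈ {f : cV.Hom x y | (deg f).2 = 0} → g ∈ {g : cV.Hom y z | (deg g).2 = 0} →
          cV.comp f g ∈ {h : cV.Hom x z | (deg h).2 = 0})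
       (hidG : ∀ x : V, cV.id x ∈ {f : cV.Hom x x | (deg f).1 = 0})
       (hcompG : ∀ {x y z : V} (f : cV.Hom x y) (g : cV.Hom y z),
          f ∈ {f : cV.Hom x y | (deg f).1 = 0} → g ∈ {g : cV.Hom y z | (deg g).1 = 0} →
          cV.comp f g ∈ {h : cV.Hom x z | (deg h).1 = 0}),
      let cL := wideSubcat V cV (fun x y => {f : cV.Hom x y | (deg f).2 = 0}) hidL @hcompL
      let cG := wideSubcat V cV (fun x y => {f : cV.Hom x y | (deg f).1 = 0}) hidG @hcompG
      -- `Λ` is a `k₁`-graph and `Γ` is a `k₂`-graph: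
      IsKGraphDeg V cL (fun _ _ f => (deg f.val).1) ∧
      IsKGraphDeg V cG (fun _ _ f => (deg f.val).2) ∧
      -- unique actions `◁, ▷` with `λ ∘ γ = (λ ◁ γ) ∘ (λ ▷ γ)`:
      (∃! F : ∀ (z m y : V), cL.Hom m y → cG.Hom z m → Σ w : V, cG.Hom w y × cL.Hom z w,
        ∀ (z m y : V) (lam : cL.Hom m y) (gam : cG.Hom z m),
          cV.comp gam.val lam.val =
            cV.comp (F z m y lam gam).2.2.val (F z m y lam gam).2.1.val) ∧
      -- these actions form a matched pair, `(γ, λ) ↦ γ ∘ λ` is an isomorphism of categories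
      -- `Λ ⋈ Γ ≅ Σ`, and degrees are preserved as stated:
      (∃ M : MatchedPair V cL cG,
        (∀ {z m y : V} (lam : cL.Hom m y) (gam : cG.Hom z m),
          cV.comp gam.val lam.val =
            cV.comp (M.ra lam gam).val (M.la lam gam).val) ∧
        (∀ x : V, cV.comp ((M.zsId x).2.2).val ((M.zsId x).2.1).val = cV.id x) ∧
        (∀ {z m y : V} (f : M.ZSHom m y) (g : M.ZSHom z m),
          cV.comp ((M.zsComp f g).2.2).val ((M.zsComp f g).2.1).val =
            cV.comp (cV.comp (g.2.2).val (g.2.1).val) (cV.comp (f.2.2).val (f.2.1).val)) ∧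
        (∀ z y : V, Function.Bijective
          (fun f : M.ZSHom z y => cV.comp (f.2.2).val (f.2.1).val)) ∧
        (∀ {z m y : V} (lam : cL.Hom m y) (gam : cG.Hom z m),
          deg (M.la lam gam).val = deg gam.val ∧
          deg (M.ra lam gam).val = deg lam.val))) := by
  refine ⟨fun x => congrArg Prod.snd (hkg.deg_id x),
    fun f g hf hg => by simp [hkg.deg_comp, hf, hg],
    fun x => congrArg Prod.fst (hkg.deg_id x),
    fun f g hf hg => by simp [hkg.deg_comp, hf, hg],
    fun hidL hcompL hidG hcompG => ?_⟩
  have hfac := hkg.uniqueFactorization hidL @hcompL hidG @hcompG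
  exact ⟨hkg.restrict_fst hidL @hcompL, hkg.restrict_snd hidG @hcompG, hfac.existsUnique_act,
    hfac.matchedPair, fun c d => (hfac.matchedPair_ra_comp_la c d).symm,
    fun x => cV.id_comp (cV.id x), hfac.matchedPair_comp_zsComp, hfac, hkg.deg_la_ra hfac⟩
end

section
/- Let Λ be a k-graph and 𝒢 a groupoid with the same object set V. (i) If · is a faithful self-similar action of 𝒢 on Λ (satisfying (SSA1)–(SSA3)), then there is exactly one map ▷, assigning to each composable pair (g, μ) (μ a Λ-morphism with range(μ) = source(g)) a groupoid morphism g ▷ μ : source(μ) ⟶ source(g · μ), such that (𝒢, Λ, ·, ▷) is a matched pair; moreover this matched pair satisfies: (a) d(g · μ) = d(μ) for all composable (g, μ), and (b) if source(g₁) = source(g₂) and g₁ · μ = g₂ · μ for every Λ-morphism μ with range(μ) = source(g₁), then g₁ = g₂. (ii) Conversely, if (𝒢, Λ, ◁, ▷) is a matched pair with 𝒢 a groupoid and Λ a k-graph satisfying (a) and (b) (with ◁ in place of ·), then ◁ is a faithful self-similar action of 𝒢 on Λ, with h := g ▷ e witnessing (SSA3). -/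
open CategoryTheory

universe v u

/-- **Statement 9.** Faithful self-similar actions of a groupoid `𝒢` on a `k`-graph `Λ`
(with common object set `V`) correspond to matched pairs `(𝒢, Λ, ◁, ▷)` satisfying
(a) `d(g ◁ μ) = d(μ)` and (b) faithfulness of the left action. -/
theorem selfSimilar_iff_matchedPair (k : ℕ) (V : Type u)
    (cG : Category.{v} V) (cΛ : Category.{v} V)
    (deg : ∀ ⦃x y : V⦄, cΛ.Hom x y → (Fin k → ℕ))
    -- `𝒢` is a groupoid:
    (_hGrpd : ∀ {x y : V} (f : cG.Hom x y),
        ∃ g : cG.Hom y x, cG.comp f g = cG.id x ∧ cG.comp g f = cG.id y)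
    -- `Λ` is a `k`-graph:
    (_hdeg_id : ∀ x : V, deg (cΛ.id x) = 0)
    (_hdeg_comp : ∀ {x y z : V} (f : cΛ.Hom x y) (g : cΛ.Hom y z),
        deg (cΛ.comp f g) = deg f + deg g)
    (_hfact : ∀ {x y : V} (f : cΛ.Hom x y) (m n : Fin k → ℕ), deg f = m + n →
        ∃! p : Σ z : V, cΛ.Hom x z × cΛ.Hom z y,
          deg p.2.1 = n ∧ deg p.2.2 = m ∧ cΛ.comp p.2.1 p.2.2 = f) :
    -- Part (i): a faithful self-similar action yields a unique compatible matched pair.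
    (∀ (act : ∀ {z u v : V}, cG.Hom u v → cΛ.Hom z u → Σ z' : V, cΛ.Hom z' v),
      -- `·` is a left action:
      (∀ {z u : V} (μ : cΛ.Hom z u), act (cG.id u) μ = ⟨z, μ⟩) →
      (∀ {z u u' v : V} (g : cG.Hom u' v) (h : cG.Hom u u') (μ : cΛ.Hom z u),
          act (cG.comp h g) μ = act g (act h μ).2) →
      -- (SSA1): `g · (uΛ^n) = vΛ^n`:
      (∀ {u v : V} (g : cG.Hom u v) (n : Fin k → ℕ),
          (∀ {z : V} (μ : cΛ.Hom z u), deg μ = n → deg (act g μ).2 = n) ∧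
          (∀ σ : Σ z' : V, cΛ.Hom z' v, deg σ.2 = n →
            ∃ μ : Σ z : V, cΛ.Hom z u, deg μ.2 = n ∧ act g μ.2 = σ)) →
      -- (SSA2): faithfulness:
      (∀ {u v₁ v₂ : V} (g₁ : cG.Hom u v₁) (g₂ : cG.Hom u v₂),
          (∀ {z : V} (μ : cΛ.Hom z u), HEq (act g₁ μ) (act g₂ μ)) →
          v₁ = v₂ ∧ HEq g₁ g₂) →
      -- (SSA3): self-similarity on edges:
      (∀ {z u v : V} (g : cG.Hom u v) (e : cΛ.Hom z u), (∃ i, deg e = Pi.single i 1) →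
          ∃ h : cG.Hom z (act g e).1, ∀ {z₀ : V} (μ : cΛ.Hom z₀ z),
            act g (cΛ.comp μ e) = ⟨(act h μ).1, cΛ.comp (act h μ).2 (act g e).2⟩) →
      -- then there is exactly one restriction map `▷` making `(𝒢, Λ, ·, ▷)` a matched pair:
      ((∃! R : ∀ (z u v : V) (g : cG.Hom u v) (μ : cΛ.Hom z u), cG.Hom z (act g μ).1,
          ∃ M : MatchedPair V cG cΛ,
            ∀ (z u v : V) (g : cG.Hom u v) (μ : cΛ.Hom z u),
              M.w g μ = (act g μ).1 ∧ HEq (M.la g μ) ((act g μ).2) ∧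
              HEq (M.ra g μ) (R z u v g μ)) ∧
        -- (a) the matched pair is degree preserving:
        (∀ {z u v : V} (g : cG.Hom u v) (μ : cΛ.Hom z u), deg (act g μ).2 = deg μ) ∧
        -- (b) the left action is faithful:
        (∀ {u v₁ v₂ : V} (g₁ : cG.Hom u v₁) (g₂ : cG.Hom u v₂),
          (∀ {z : V} (μ : cΛ.Hom z u), HEq (act g₁ μ) (act g₂ μ)) →
          v₁ = v₂ ∧ HEq g₁ g₂))) ∧
    -- Part (ii): conversely, a matched pair satisfying (a) and (b) is a faithful
    -- self-similar action, with `h := g ▷ e` witnessing (SSA3).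
    (∀ M : MatchedPair V cG cΛ,
      -- (a):
      (∀ {z u v : V} (g : cG.Hom u v) (μ : cΛ.Hom z u), deg (M.la g μ) = deg μ) →
      -- (b):
      (∀ {u v₁ v₂ : V} (g₁ : cG.Hom u v₁) (g₂ : cG.Hom u v₂),
          (∀ {z : V} (μ : cΛ.Hom z u),
            HEq (⟨M.w g₁ μ, M.la g₁ μ⟩ : Σ z' : V, cΛ.Hom z' v₁)
                (⟨M.w g₂ μ, M.la g₂ μ⟩ : Σ z' : V, cΛ.Hom z' v₂)) →
          v₁ = v₂ ∧ HEq g₁ g₂) →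
      -- (SSA1):
      ((∀ {u v : V} (g : cG.Hom u v) (n : Fin k → ℕ),
          (∀ {z : V} (μ : cΛ.Hom z u), deg μ = n → deg (M.la g μ) = n) ∧
          (∀ σ : Σ z' : V, cΛ.Hom z' v, deg σ.2 = n →
            ∃ μ : Σ z : V, cΛ.Hom z u, deg μ.2 = n ∧
              (⟨M.w g μ.2, M.la g μ.2⟩ : Σ z' : V, cΛ.Hom z' v) = σ)) ∧
       -- (SSA2):
       (∀ {u v₁ v₂ : V} (g₁ : cG.Hom u v₁) (g₂ : cG.Hom u v₂),
          (∀ {z : V} (μ : cΛ.Hom z u),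
            HEq (⟨M.w g₁ μ, M.la g₁ μ⟩ : Σ z' : V, cΛ.Hom z' v₁)
                (⟨M.w g₂ μ, M.la g₂ μ⟩ : Σ z' : V, cΛ.Hom z' v₂)) →
          v₁ = v₂ ∧ HEq g₁ g₂) ∧
       -- (SSA3), witnessed by `h := g ▷ e`:
       (∀ {z u v : V} (g : cG.Hom u v) (e : cΛ.Hom z u), (∃ i, deg e = Pi.single i 1) →
          ∀ {z₀ : V} (μ : cΛ.Hom z₀ z),
            (⟨M.w g (cΛ.comp μ e), M.la g (cΛ.comp μ e)⟩ : Σ z' : V, cΛ.Hom z' v) =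
              ⟨M.w (M.ra g e) μ, cΛ.comp (M.la (M.ra g e) μ) (M.la g e)⟩))) := by
  constructor
  · -- Part (i)
    intro act hact_id hact_comp hSSA1 hSSA2 hSSA3
    -- snd of equal sigmas are HEq
    have sndH : ∀ {A : Type u} {B : A → Type v} (σ τ : Sigma B), σ = τ → HEq σ.2 τ.2 := by
      rintro A B σ τ rfl; rfl
    -- degree preservation
    have L1 : ∀ {z u v : V} (g : cG.Hom u v) (μ : cΛ.Hom z u), deg (act g μ).2 = deg μ :=
      fun g μ => (hSSA1 g (deg μ)).1 μ rfl
    -- degree-zero morphisms are identities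
    have L0 : ∀ {x y : V} (f : cΛ.Hom x y), deg f = 0 → x = y ∧ HEq f (cΛ.id y) := by
      intro x y f hf
      obtain ⟨p, -, hu⟩ := _hfact f 0 0 (by simp [hf])
      have h1 : (⟨y, (f, cΛ.id y)⟩ : Σ z : V, cΛ.Hom x z × cΛ.Hom z y) = p :=
        hu _ ⟨hf, _hdeg_id y, cΛ.comp_id f⟩
      have h2 : (⟨x, (cΛ.id x, f)⟩ : Σ z : V, cΛ.Hom x z × cΛ.Hom z y) = p :=
        hu _ ⟨_hdeg_id x, hf, cΛ.id_comp f⟩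
      have h3 := h1.trans h2.symm
      have he : y = x := congrArg Sigma.fst h3
      subst he
      have h4 : (f, cΛ.id y) = (cΛ.id y, f) := eq_of_heq (sndH _ _ h3)
      exact ⟨rfl, heq_of_eq (congrArg Prod.fst h4)⟩
    -- right cancellation
    have L2 : ∀ {s y : V} (γ : cΛ.Hom s y) (σ τ : Σ z' : V, cΛ.Hom z' s),
        deg σ.2 = deg τ.2 →
        (⟨σ.1, cΛ.comp σ.2 γ⟩ : Σ z' : V, cΛ.Hom z' y) = ⟨τ.1, cΛ.comp τ.2 γ⟩ → σ = τ := by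
      rintro s y γ ⟨x, α⟩ ⟨x', β⟩ hd h
      have he : x = x' := congrArg Sigma.fst h
      subst he
      have heq : cΛ.comp α γ = cΛ.comp β γ := eq_of_heq (sndH _ _ h)
      obtain ⟨p, -, hu⟩ := _hfact (cΛ.comp α γ) (deg γ) (deg α) (by rw [_hdeg_comp, add_comm])
      have h1 : (⟨s, (α, γ)⟩ : Σ z : V, cΛ.Hom x z × cΛ.Hom z y) = p := hu _ ⟨rfl, rfl, rfl⟩
      have h2 : (⟨s, (β, γ)⟩ : Σ z : V, cΛ.Hom x z × cΛ.Hom z y) = p :=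
        hu _ ⟨hd.symm, rfl, heq.symm⟩
      have h4 : (α, γ) = (β, γ) := eq_of_heq (sndH _ _ (h1.trans h2.symm))
      rw [show α = β from congrArg Prod.fst h4]
    -- existence of the restriction
    have L3 : ∀ (N : ℕ) {z u v : V} (g : cG.Hom u v) (μ : cΛ.Hom z u),
        (∑ i, deg μ i) = N →
        ∃ h : cG.Hom z (act g μ).1, ∀ {z₀ : V} (ν : cΛ.Hom z₀ z),
          act g (cΛ.comp ν μ) = ⟨(act h ν).1, cΛ.comp (act h ν).2 (act g μ).2⟩ := by
      intro N
      induction N using Nat.strong_induction_on with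
      | _ N IH =>
        intro z u v g μ hN
        by_cases h0 : deg μ = 0
        · obtain ⟨he, hid⟩ := L0 μ h0
          subst he
          rw [eq_of_heq hid] at hN ⊢
          obtain ⟨e1, e2⟩ := L0 (act g (cΛ.id z)).2 (by rw [L1, _hdeg_id])
          have hσ : act g (cΛ.id z) = ⟨v, cΛ.id v⟩ := Sigma.ext e1 e2
          rw [hσ]
          exact ⟨g, fun {z₀} ν => by rw [cΛ.comp_id, cΛ.comp_id]⟩
        · have hex : ∃ i, deg μ i ≠ 0 := by
            by_contra hc; push_neg at hc; exact h0 (funext fun i => hc i)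
          obtain ⟨i, hi⟩ := hex
          have hfac : deg μ = Pi.single i 1 + (deg μ - Pi.single i 1) := by
            funext j
            by_cases hji : j = i
            · subst hji
              simp only [Pi.add_apply, Pi.sub_apply, Pi.single_eq_same]
              omega
            · simp [Pi.single_apply, hji]
          obtain ⟨⟨s, ρ, e⟩, ⟨hd1, hd2, hcomp⟩, -⟩ :=
            _hfact μ (Pi.single i 1) (deg μ - Pi.single i 1) hfac
          obtain ⟨h₁, hp₁⟩ := hSSA3 g e ⟨i, hd2⟩
          have hsum1 : ∑ j, deg e j = 1 := by
            rw [hd2, Finset.sum_pi_single']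
            simp
          have hdsum : (∑ j, deg ρ j) + (∑ j, deg e j) = N := by
            rw [← Finset.sum_add_distrib]
            have h5 : deg ρ + deg e = deg μ := by rw [← _hdeg_comp ρ e, hcomp]
            rw [Finset.sum_congr rfl fun j _ => show deg ρ j + deg e j = deg μ j by
              rw [← h5]; rfl, hN]
          have hlt : (∑ j, deg ρ j) < N := by omega
          obtain ⟨h₂, hp₂⟩ := IH (∑ j, deg ρ j) hlt h₁ ρ rfl
          have hσ : act g μ = ⟨(act h₁ ρ).1, cΛ.comp (act h₁ ρ).2 (act g e).2⟩ := by
            rw [← hcomp]; exact hp₁ ρ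
          rw [hσ]
          refine ⟨h₂, fun {z₀} ν => ?_⟩
          calc act g (cΛ.comp ν μ) = act g (cΛ.comp (cΛ.comp ν ρ) e) := by
                rw [← hcomp, cΛ.assoc]
            _ = ⟨(act h₁ (cΛ.comp ν ρ)).1,
                  cΛ.comp (act h₁ (cΛ.comp ν ρ)).2 (act g e).2⟩ := hp₁ _
            _ = ⟨(act h₂ ν).1,
                  cΛ.comp (cΛ.comp (act h₂ ν).2 (act h₁ ρ).2) (act g e).2⟩ := by rw [hp₂ ν]
            _ = ⟨(act h₂ ν).1,
                  cΛ.comp (act h₂ ν).2 (cΛ.comp (act h₁ ρ).2 (act g e).2)⟩ := by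
                rw [cΛ.assoc]
    choose R hR using fun (z u v : V) (g : cG.Hom u v) (μ : cΛ.Hom z u) =>
      L3 (∑ i, deg μ i) g μ rfl
    -- uniqueness of restrictions
    have L4 : ∀ {z v t₁ t₂ : V} (h₁ : cG.Hom z t₁) (h₂ : cG.Hom z t₂)
        (ξ₁ : cΛ.Hom t₁ v) (ξ₂ : cΛ.Hom t₂ v), deg ξ₁ = deg ξ₂ →
        (∀ {z₀ : V} (ν : cΛ.Hom z₀ z),
          (⟨(act h₁ ν).1, cΛ.comp (act h₁ ν).2 ξ₁⟩ : Σ z' : V, cΛ.Hom z' v) =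
            ⟨(act h₂ ν).1, cΛ.comp (act h₂ ν).2 ξ₂⟩) →
        t₁ = t₂ ∧ HEq h₁ h₂ := by
      intro z v t₁ t₂ h₁ h₂ ξ₁ ξ₂ hd hprop
      obtain ⟨e1, e2⟩ := L0 (act h₁ (cΛ.id z)).2 (by rw [L1, _hdeg_id])
      obtain ⟨f1, f2⟩ := L0 (act h₂ (cΛ.id z)).2 (by rw [L1, _hdeg_id])
      have hσ₁ : act h₁ (cΛ.id z) = ⟨t₁, cΛ.id t₁⟩ := Sigma.ext e1 e2
      have hσ₂ : act h₂ (cΛ.id z) = ⟨t₂, cΛ.id t₂⟩ := Sigma.ext f1 f2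
      have hid := hprop (cΛ.id z)
      rw [hσ₁, hσ₂] at hid
      simp only [cΛ.id_comp] at hid
      have het : t₁ = t₂ := congrArg Sigma.fst hid
      subst het
      have hξ : ξ₁ = ξ₂ := eq_of_heq (sndH _ _ hid)
      subst hξ
      refine ⟨rfl, (hSSA2 h₁ h₂ fun {z₀} ν => ?_).2⟩
      have := L2 ξ₁ (act h₁ ν) (act h₂ ν) (by rw [L1, L1]) (hprop ν)
      rw [this]
    -- helper congruences for the uniqueness argument
    have congrH : ∀ (M' : MatchedPair V cG cΛ) {z T₁ T₂ v : V} (_ : T₁ = T₂)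
        (h₁ : cG.Hom z T₁) (h₂ : cG.Hom z T₂) (_ : HEq h₁ h₂)
        (ξ₁ : cΛ.Hom T₁ v) (ξ₂ : cΛ.Hom T₂ v) (_ : HEq ξ₁ ξ₂) {z₀ : V} (ν : cΛ.Hom z₀ z),
        (⟨M'.w h₁ ν, cΛ.comp (M'.la h₁ ν) ξ₁⟩ : Σ z' : V, cΛ.Hom z' v) =
          ⟨M'.w h₂ ν, cΛ.comp (M'.la h₂ ν) ξ₂⟩ := by
      rintro M' z T₁ T₂ v rfl h₁ h₂ hh ξ₁ ξ₂ hξ z₀ ν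
      rw [eq_of_heq hh, eq_of_heq hξ]
    have compH : ∀ {x₁ x₂ t y : V} (_ : x₁ = x₂) (α₁ : cΛ.Hom x₁ t) (α₂ : cΛ.Hom x₂ t)
        (_ : HEq α₁ α₂) (ξ : cΛ.Hom t y),
        (⟨x₁, cΛ.comp α₁ ξ⟩ : Σ z' : V, cΛ.Hom z' y) = ⟨x₂, cΛ.comp α₂ ξ⟩ := by
      rintro x₁ x₂ t y rfl α₁ α₂ hα ξ
      rw [eq_of_heq hα]
    refine ⟨⟨R, ⟨⟨⟨fun {z m y} g μ => (act g μ).1, fun {z m y} g μ => (act g μ).2,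
        fun {z m y} g μ => R z m y g μ,
        ?_, ?_, ?_, ?_, ?_, ?_, ?_, ?_, ?_, ?_, ?_, ?_⟩,
        fun z u v g μ => ⟨rfl, HEq.rfl, HEq.rfl⟩⟩, ?_⟩⟩, fun {z u v} g μ => L1 g μ, hSSA2⟩
    · -- w_id_left
      intro z m d
      exact congrArg Sigma.fst (hact_id d)
    · -- la_id_left
      intro z m d
      exact sndH _ _ (hact_id d)
    · -- ra_id_left
      intro z m d
      refine (L4 (R z m m (cG.id m) d) (cG.id z) (act (cG.id m) d).2 d (L1 _ _)
        fun {z₀} ν => ?_).2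
      rw [← hR z m m (cG.id m) d ν, hact_id (cΛ.comp ν d), hact_id ν]
    · -- w_id_right
      intro m y g
      exact (L0 (act g (cΛ.id m)).2 (by rw [L1, _hdeg_id])).1
    · -- la_id_right
      intro m y g
      exact (L0 (act g (cΛ.id m)).2 (by rw [L1, _hdeg_id])).2
    · -- ra_id_right
      intro m y g
      refine (L4 (R m m y g (cΛ.id m)) g (act g (cΛ.id m)).2 (cΛ.id y)
        (by rw [L1, _hdeg_id, _hdeg_id]) fun {z₀} ν => ?_).2
      rw [← hR m m y g (cΛ.id m) ν, cΛ.comp_id, cΛ.comp_id]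
    · -- w_comp_left
      intro z m kk y c₁ c₂ d
      exact congrArg Sigma.fst (hact_comp c₁ c₂ d)
    · -- la_comp_left
      intro z m kk y c₁ c₂ d
      exact sndH _ _ (hact_comp c₁ c₂ d)
    · -- ra_comp_left
      intro z m kk y c₁ c₂ d
      refine (L4 (R z m y (cG.comp c₂ c₁) d)
        (cG.comp (R z m kk c₂ d) (R (act c₂ d).1 kk y c₁ (act c₂ d).2))
        (act (cG.comp c₂ c₁) d).2 (act c₁ (act c₂ d).2).2
        (by rw [L1, L1, L1]) fun {z₀} ν => ?_).2
      rw [← hR z m y (cG.comp c₂ c₁) d ν, hact_comp c₁ c₂ (cΛ.comp ν d),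
        hR z m kk c₂ d ν, hact_comp]
      exact hR _ kk y c₁ (act c₂ d).2 _
    · -- w_comp_right
      intro z kk m y c d₁ d₂
      exact congrArg Sigma.fst (hR kk m y c d₁ d₂)
    · -- la_comp_right
      intro z kk m y c d₁ d₂
      exact sndH _ _ (hR kk m y c d₁ d₂)
    · -- ra_comp_right
      intro z kk m y c d₁ d₂
      refine (L4 (R z m y c (cΛ.comp d₂ d₁)) (R z kk (act c d₁).1 (R kk m y c d₁) d₂)
        (act c (cΛ.comp d₂ d₁)).2
        (cΛ.comp (act (R kk m y c d₁) d₂).2 (act c d₁).2)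
        (by rw [L1, _hdeg_comp, _hdeg_comp, L1, L1]) fun {z₀} ν => ?_).2
      rw [← hR z m y c (cΛ.comp d₂ d₁) ν, ← cΛ.assoc ν d₂ d₁,
        hR kk m y c d₁ (cΛ.comp ν d₂), hR z kk (act c d₁).1 (R kk m y c d₁) d₂ ν,
        cΛ.assoc]
    · -- uniqueness of R
      rintro R' ⟨M', hM'⟩
      funext z u v g μ
      have prop : ∀ {z₀ : V} (ν : cΛ.Hom z₀ z),
          act g (cΛ.comp ν μ) =
            ⟨(act (R' z u v g μ) ν).1, cΛ.comp (act (R' z u v g μ) ν).2 (act g μ).2⟩ := by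
        intro z₀ ν
        have step1 : act g (cΛ.comp ν μ) =
            ⟨M'.w g (cΛ.comp ν μ), M'.la g (cΛ.comp ν μ)⟩ :=
          (Sigma.ext (hM' z₀ u v g (cΛ.comp ν μ)).1 (hM' z₀ u v g (cΛ.comp ν μ)).2.1).symm
        have step2 : (⟨M'.w g (cΛ.comp ν μ), M'.la g (cΛ.comp ν μ)⟩ : Σ z' : V, cΛ.Hom z' v) =
            ⟨M'.w (M'.ra g μ) ν, cΛ.comp (M'.la (M'.ra g μ) ν) (M'.la g μ)⟩ :=
          Sigma.ext (M'.w_comp_right g μ ν) (M'.la_comp_right g μ ν)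
        have step3 := congrH M' (hM' z u v g μ).1 (M'.ra g μ) (R' z u v g μ)
          (hM' z u v g μ).2.2 (M'.la g μ) (act g μ).2 (hM' z u v g μ).2.1 ν
        have step4 := compH (hM' z₀ z (act g μ).1 (R' z u v g μ) ν).1
          (M'.la (R' z u v g μ) ν) (act (R' z u v g μ) ν).2
          (hM' z₀ z (act g μ).1 (R' z u v g μ) ν).2.1 (act g μ).2
        exact step1.trans (step2.trans (step3.trans step4))
      exact eq_of_heq ((L4 (R' z u v g μ) (R z u v g μ) (act g μ).2 (act g μ).2 rfl
        (fun {z₀} ν => (prop ν).symm.trans (hR z u v g μ ν))).2)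
  · -- Part (ii)
    intro M ha hb
    refine ⟨fun {u v} g n => ⟨fun {z} μ hμ => (ha g μ).trans hμ, ?_⟩, hb, ?_⟩
    · rintro ⟨z', σ⟩ hσ
      obtain ⟨g', hg1, hg2⟩ := _hGrpd g
      refine ⟨⟨M.w g' σ, M.la g' σ⟩, (ha g' σ).trans hσ, ?_⟩
      have hw : M.w g (M.la g' σ) = z' := by
        rw [← M.w_comp_left g g' σ, hg2]
        exact M.w_id_left σ
      have hl : HEq (M.la g (M.la g' σ)) σ := by
        refine HEq.trans (M.la_comp_left g g' σ).symm ?_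
        rw [hg2]
        exact M.la_id_left σ
      exact Sigma.ext hw hl
    · intro z u v g e _ z₀ μ
      exact Sigma.ext (M.w_comp_right g e μ) (M.la_comp_right g e μ)
end

section
/- Let (𝒞, 𝒟, ◁, ▷) be a matched pair and k ∈ ℕ. (i) For every 𝒞-morphism c and every composable (k+1)-tuple d = (d₀, …, d_k) of 𝒟-morphisms with source(c) = range(d₀), and every i with 1 ≤ i ≤ k+1, the face maps commute with the extended left action: ∂^i(c ◁ d) = c ◁ ∂^i(d). (ii) For every composable (k+1)-tuple c = (c₀, …, c_k) of 𝒞-morphisms and every 𝒟-morphism d with source(c_k) = range(d), and every j with 0 ≤ j ≤ k, the face maps commute with the extended right action: ∂^j(c ▷ d) = (∂^j c) ▷ d. -/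
open CategoryTheory

universe v u

/-- Composable tuples `(d₀, …, d_{k-1})` of `𝒟`-morphisms (`d₀` at the range end),
from source `z` to range `y`. -/
inductive DTup {V : Type u} (D : Category.{v} V) : ℕ → V → V → Type (max u v)
  | nil (x : V) : DTup D 0 x x
  | cons {k : ℕ} {z m y : V} (d : D.Hom m y) (rest : DTup D k z m) : DTup D (k + 1) z y

/-- Composable tuples `(c₀, …, c_{k-1})` of `𝒞`-morphisms (`c_{k-1}` at the source end),
from source `z` to range `y`. -/
inductive CTup {V : Type u} (C : Category.{v} V) : ℕ → V → V → Type (max u v)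
  | nil (x : V) : CTup C 0 x x
  | snoc {k : ℕ} {z m y : V} (rest : CTup C k m y) (c : C.Hom z m) : CTup C (k + 1) z y

namespace MatchedPair

variable {V : Type u} {C D : Category.{v} V}

/-- The extended left action `c ◁ (d₀, …, d_k)` on composable tuples of `𝒟`-morphisms,
together with its source object. -/
def laT (M : MatchedPair V C D) :
    ∀ {k : ℕ} {z m y : V}, C.Hom m y → DTup D k z m → Σ z' : V, DTup D k z' y
  | 0, _, _, y, _, DTup.nil _ => ⟨y, DTup.nil y⟩
  | _ + 1, _, _, _, c, DTup.cons d rest =>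
      ⟨(laT M (M.ra c d) rest).1, DTup.cons (M.la c d) (laT M (M.ra c d) rest).2⟩

/-- The extended right action `(c₀, …, c_k) ▷ d` on composable tuples of `𝒞`-morphisms,
together with its range object. -/
def raT (M : MatchedPair V C D) :
    ∀ {k : ℕ} {z m y : V}, CTup C k m y → D.Hom z m → Σ y' : V, CTup C k z y'
  | 0, z, _, _, CTup.nil _, _ => ⟨z, CTup.nil z⟩
  | _ + 1, _, _, _, CTup.snoc rest c, d =>
      ⟨(raT M rest (M.la c d)).1, CTup.snoc (raT M rest (M.la c d)).2 (M.ra c d)⟩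

end MatchedPair

namespace DTup

variable {V : Type u} {D : Category.{v} V}

/-- The face `∂⁰`: delete the first (range-end) entry. -/
def dropFirst : ∀ {k : ℕ} {z y : V}, DTup D (k + 1) z y → Σ m : V, DTup D k z m
  | _, _, _, cons _ rest => ⟨_, rest⟩

/-- The face `∂^{k+1}`: delete the last (source-end) entry. -/
def dropLast : ∀ {k : ℕ} {z y : V}, DTup D (k + 1) z y → Σ m : V, DTup D k m y
  | 0, _, _, cons _ (nil _) => ⟨_, nil _⟩
  | _ + 1, _, _, cons d rest => ⟨(dropLast rest).1, cons d (dropLast rest).2⟩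

/-- The face `∂^{i+1}` (for `i : Fin k`): compose the adjacent entries in positions `i` and
`i+1` counting from the range end. -/
def composeAt : ∀ {k : ℕ} {z y : V}, Fin k → DTup D (k + 1) z y → DTup D k z y
  | _ + 1, _, _, ⟨0, _⟩, cons d₀ (cons d₁ rest) => cons (D.comp d₁ d₀) rest
  | _ + 1, _, _, ⟨i + 1, h⟩, cons d₀ rest => cons d₀ (composeAt ⟨i, by omega⟩ rest)

end DTup

namespace CTup

variable {V : Type u} {C : Category.{v} V}

/-- The face `∂⁰`: delete the first (range-end) entry. -/
def dropFirst : ∀ {k : ℕ} {z y : V}, CTup C (k + 1) z y → Σ m : V, CTup C k z m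
  | 0, _, _, snoc (nil _) _ => ⟨_, nil _⟩
  | _ + 1, _, _, snoc rest c => ⟨(dropFirst rest).1, snoc (dropFirst rest).2 c⟩

/-- Compose the adjacent entries in positions `i` and `i+1` counting from the source end. -/
def composeAt : ∀ {k : ℕ} {z y : V}, Fin k → CTup C (k + 1) z y → CTup C k z y
  | _ + 1, _, _, ⟨0, _⟩, snoc (snoc rest c₁) c₀ => snoc rest (C.comp c₀ c₁)
  | _ + 1, _, _, ⟨i + 1, h⟩, snoc rest c => snoc (composeAt ⟨i, by omega⟩ rest) c

end CTup

section Aux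

variable {V : Type u} {C D : Category.{v} V}

theorem laT_congr (M : MatchedPair V C D) {k : ℕ} {z m₁ m₂ y₁ y₂ : V}
    (hm : m₁ = m₂) (hy : y₁ = y₂)
    {c₁ : C.Hom m₁ y₁} {c₂ : C.Hom m₂ y₂} (hc : HEq c₁ c₂)
    {d₁ : DTup D k z m₁} {d₂ : DTup D k z m₂} (hd : HEq d₁ d₂) :
    HEq (M.laT c₁ d₁) (M.laT c₂ d₂) := by
  subst hm; subst hy; cases hc; cases hd; rfl

theorem raT_congr (M : MatchedPair V C D) {k : ℕ} {z₁ z₂ m₁ m₂ y : V}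
    (hz : z₁ = z₂) (hm : m₁ = m₂)
    {t₁ : CTup C k m₁ y} {t₂ : CTup C k m₂ y} (ht : HEq t₁ t₂)
    {d₁ : D.Hom z₁ m₁} {d₂ : D.Hom z₂ m₂} (hd : HEq d₁ d₂) :
    HEq (M.raT t₁ d₁) (M.raT t₂ d₂) := by
  subst hz; subst hm; cases ht; cases hd; rfl

theorem sigma_cons_congr {k : ℕ} {y m₁ m₂ : V} (hm : m₁ = m₂)
    {h₁ : D.Hom m₁ y} {h₂ : D.Hom m₂ y} (hh : HEq h₁ h₂)
    {S₁ : Σ z', DTup D k z' m₁} {S₂ : Σ z', DTup D k z' m₂} (hS : HEq S₁ S₂) :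
    (⟨S₁.1, DTup.cons h₁ S₁.2⟩ : Σ z', DTup D (k + 1) z' y) = ⟨S₂.1, DTup.cons h₂ S₂.2⟩ := by
  subst hm; cases hh; cases hS; rfl

theorem sigma_snoc_congr {k : ℕ} {z m₁ m₂ : V} (hm : m₁ = m₂)
    {h₁ : C.Hom z m₁} {h₂ : C.Hom z m₂} (hh : HEq h₁ h₂)
    {S₁ : Σ y', CTup C k m₁ y'} {S₂ : Σ y', CTup C k m₂ y'} (hS : HEq S₁ S₂) :
    (⟨S₁.1, CTup.snoc S₁.2 h₁⟩ : Σ y', CTup C (k + 1) z y') = ⟨S₂.1, CTup.snoc S₂.2 h₂⟩ := by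
  subst hm; cases hh; cases hS; rfl

theorem la_composeAt (M : MatchedPair V C D) :
    ∀ {k : ℕ} {z m y : V} (c : C.Hom m y) (d : DTup D (k + 1) z m) (i : Fin k),
    (⟨(M.laT c d).1, DTup.composeAt i (M.laT c d).2⟩ : Σ z', DTup D k z' y) =
      M.laT c (DTup.composeAt i d)
  | _ + 1, _, _, _, c, DTup.cons d₀ (DTup.cons d₁ rest), ⟨0, _⟩ => by
    exact sigma_cons_congr (M.w_comp_right c d₀ d₁).symm (M.la_comp_right c d₀ d₁).symm
      (laT_congr M rfl (M.w_comp_right c d₀ d₁).symm (M.ra_comp_right c d₀ d₁).symm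
        HEq.rfl)
  | _ + 1, _, _, _, c, DTup.cons d₀ rest, ⟨i + 1, h⟩ =>
    sigma_cons_congr rfl HEq.rfl
      (heq_of_eq (la_composeAt M (M.ra c d₀) rest ⟨i, by omega⟩))

theorem la_dropLast (M : MatchedPair V C D) :
    ∀ {k : ℕ} {z m y : V} (c : C.Hom m y) (d : DTup D (k + 1) z m),
    DTup.dropLast (M.laT c d).2 = M.laT c (DTup.dropLast d).2
  | 0, _, _, _, c, DTup.cons d₀ (DTup.nil _) => rfl
  | _ + 1, _, _, _, c, DTup.cons d₀ rest =>
    sigma_cons_congr rfl HEq.rfl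
      (heq_of_eq (la_dropLast M (M.ra c d₀) rest))

theorem ra_dropFirst (M : MatchedPair V C D) :
    ∀ {k : ℕ} {z m y : V} (c : CTup C (k + 1) m y) (d : D.Hom z m),
    CTup.dropFirst (M.raT c d).2 = M.raT (CTup.dropFirst c).2 d
  | 0, _, _, _, CTup.snoc (CTup.nil _) c₀, d => rfl
  | _ + 1, _, _, _, CTup.snoc rest c₀, d =>
    sigma_snoc_congr rfl HEq.rfl
      (heq_of_eq (ra_dropFirst M rest (M.la c₀ d)))

theorem ra_composeAt (M : MatchedPair V C D) :
    ∀ {k : ℕ} {z m y : V} (c : CTup C (k + 1) m y) (d : D.Hom z m) (i : Fin k),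
    (⟨(M.raT c d).1, CTup.composeAt i (M.raT c d).2⟩ : Σ y', CTup C k z y') =
      M.raT (CTup.composeAt i c) d
  | _ + 1, _, _, _, CTup.snoc (CTup.snoc rest c₁) c₀, d, ⟨0, _⟩ => by
    exact sigma_snoc_congr (M.w_comp_left c₁ c₀ d).symm (M.ra_comp_left c₁ c₀ d).symm
      (raT_congr M (M.w_comp_left c₁ c₀ d).symm rfl HEq.rfl
        (M.la_comp_left c₁ c₀ d).symm)
  | _ + 1, _, _, _, CTup.snoc rest c₀, d, ⟨i + 1, h⟩ =>
    sigma_snoc_congr rfl HEq.rfl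
      (heq_of_eq (ra_composeAt M rest (M.la c₀ d) ⟨i, by omega⟩))

end Aux

/-- (i) For `1 ≤ i ≤ k+1`, the face maps of a composable `(k+1)`-tuple of `𝒟`-morphisms commute
with the extended left action: `∂^i(c ◁ d) = c ◁ ∂^i(d)`.
(ii) For `0 ≤ j ≤ k`, the face maps of a composable `(k+1)`-tuple of `𝒞`-morphisms commute
with the extended right action: `∂^j(c ▷ d) = (∂^j c) ▷ d`.
(The interior faces are indexed by `Fin k`; the remaining allowed face is `∂^{k+1}` in (i)
and `∂⁰` in (ii).) -/
theorem faces_commute_with_extended_actions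
    (V : Type u) (C D : Category.{v} V) (M : MatchedPair V C D) (k : ℕ) :
    -- (i)
    (∀ {z m y : V} (c : C.Hom m y) (d : DTup D (k + 1) z m),
      (∀ i : Fin k,
        (⟨(M.laT c d).1, DTup.composeAt i (M.laT c d).2⟩ : Σ z' : V, DTup D k z' y) =
          M.laT c (DTup.composeAt i d)) ∧
      DTup.dropLast (M.laT c d).2 = M.laT c (DTup.dropLast d).2) ∧
    -- (ii)
    (∀ {z m y : V} (c : CTup C (k + 1) m y) (d : D.Hom z m),
      CTup.dropFirst (M.raT c d).2 = M.raT (CTup.dropFirst c).2 d ∧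
      (∀ i : Fin k,
        (⟨(M.raT c d).1, CTup.composeAt i (M.raT c d).2⟩ : Σ y' : V, CTup C k z y') =
          M.raT (CTup.composeAt i c) d)) := by
  refine ⟨fun c d => ⟨fun i => la_composeAt M c d i, la_dropLast M c d⟩,
    fun c d => ⟨ra_dropFirst M c d, fun i => ra_composeAt M c d i⟩⟩
end

section
/- Let X be a type equipped with an action of the additive group ℤ (equivalently, with a bijection of X, n acting as its n-th iterate). Write ℤ\X for the set of orbits, Per(X) for the set of points of X with finite orbit, and ℤ\Per(X) for the set of finite orbits. Let ℤX = (X →₀ ℤ) be the free abelian group on X with the induced ℤ-action by permutation of basis vectors, let (ℤX)_ℤ = ℤX / ⟨n • m − m : n ∈ ℤ, m ∈ ℤX⟩ be its coinvariants, and (ℤX)^ℤ = {m ∈ ℤX : n • m = m for all n ∈ ℤ} its invariants. Then: (i) there is an additive isomorphism φ₀ from the free abelian group on ℤ\X onto (ℤX)_ℤ sending the basis element at an orbit to the coinvariant class of δ_x for any representative x of that orbit; (ii) there is an additive isomorphism φ₁ from the free abelian group on ℤ\Per(X) onto (ℤX)^ℤ sending the basis element at a finite orbit O to the sum Σ_{x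 ∈ O} δ_x. -/
universe u

/-- **Statement 12.** For a type `X` with an action of the additive group `ℤ`, the free
abelian group on the orbit space is isomorphic to the coinvariants of `ℤX = (X →₀ ℤ)`, and
the free abelian group on the set of finite orbits is isomorphic to the invariants of `ℤX`. -/
theorem freeAbelian_orbits_iso_coinvariants_and_invariants
    (X : Type u) [AddAction ℤ X] :
    -- the orbit equivalence relation and the shift action on `ℤX`:
    let orbRel : X → X → Prop := fun x y => ∃ n : ℤ, n +ᵥ x = y
    let shift : ℤ → (X →₀ ℤ) →+ (X →₀ ℤ) := fun n =>
      Finsupp.mapDomain.addMonoidHom (fun x => n +ᵥ x)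
    -- the subgroup `⟨n • m − m⟩` of relators, and the invariants subgroup:
    let N : AddSubgroup (X →₀ ℤ) :=
      AddSubgroup.closure {y | ∃ (n : ℤ) (m : X →₀ ℤ), y = shift n m - m}
    let Inv : AddSubgroup (X →₀ ℤ) :=
      { carrier := {m | ∀ n : ℤ, shift n m = m}
        zero_mem' := fun n => map_zero (shift n)
        add_mem' := fun {a b} ha hb n => by
          rw [map_add, ha n, hb n]
        neg_mem' := fun {a} ha n => by
          rw [map_neg, ha n] }
    -- (i) free abelian group on `ℤ\X` ≅ coinvariants `(ℤX)_ℤ`: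
    (∃ φ₀ : (Quot orbRel →₀ ℤ) ≃+ ((X →₀ ℤ) ⧸ N),
      ∀ x : X, φ₀ (Finsupp.single (Quot.mk orbRel x) 1) =
        QuotientAddGroup.mk (Finsupp.single x 1)) ∧
    -- (ii) free abelian group on `ℤ\Per(X)` ≅ invariants `(ℤX)^ℤ`:
    (∃ φ₁ : ({q : Quot orbRel // ∃ x : X,
          (Set.range fun n : ℤ => n +ᵥ x).Finite ∧ Quot.mk orbRel x = q} →₀ ℤ) ≃+ Inv,
      ∀ (x : X) (hx : (Set.range fun n : ℤ => n +ᵥ x).Finite),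
        (φ₁ (Finsupp.single ⟨Quot.mk orbRel x, x, hx, rfl⟩ 1) : X →₀ ℤ) =
          ∑ y ∈ hx.toFinset, Finsupp.single y 1) := by
  intro orbRel shift N Inv
  constructor
  · classical
    have hshift : ∀ (n : ℤ) (m : X →₀ ℤ),
        shift n m = Finsupp.mapDomain (fun x => n +ᵥ x) m := fun _ _ => rfl
    have hmkshift : ∀ (n : ℤ) (x : X), Quot.mk orbRel (n +ᵥ x) = Quot.mk orbRel x :=
      fun n x => (Quot.sound ⟨n, rfl⟩).symm
    set f : (X →₀ ℤ) →+ (Quot orbRel →₀ ℤ) :=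
      Finsupp.mapDomain.addMonoidHom (Quot.mk orbRel) with hf
    have hfdef : ∀ m : X →₀ ℤ, f m = Finsupp.mapDomain (Quot.mk orbRel) m := fun _ => rfl
    have hfshift : ∀ (n : ℤ) (m : X →₀ ℤ), f (shift n m) = f m := by
      intro n m
      rw [hfdef, hshift, ← Finsupp.mapDomain_comp]
      congr 1
      funext x
      exact hmkshift n x
    have hNker : ∀ y ∈ N, f y = 0 := by
      intro y hy
      refine AddSubgroup.closure_induction ?_ (map_zero f) ?_ ?_ hy
      · rintro z ⟨n, m, rfl⟩
        rw [map_sub, hfshift, sub_self]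
      · intro a b _ _ ha hb; rw [map_add, ha, hb, add_zero]
      · intro a _ ha; rw [map_neg, ha, neg_zero]
    let fbar : ((X →₀ ℤ) ⧸ N) →+ (Quot orbRel →₀ ℤ) := QuotientAddGroup.lift N f hNker
    have gresp : ∀ a b : X, orbRel a b →
        (QuotientAddGroup.mk (Finsupp.single a 1) : (X →₀ ℤ) ⧸ N) =
          QuotientAddGroup.mk (Finsupp.single b 1) := by
      rintro a b ⟨n, rfl⟩
      rw [QuotientAddGroup.eq]
      apply AddSubgroup.subset_closure
      refine ⟨n, Finsupp.single a 1, ?_⟩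
      rw [hshift, Finsupp.mapDomain_single]
      abel
    let g : Quot orbRel → (X →₀ ℤ) ⧸ N := Quot.lift _ gresp
    let Φ : (Quot orbRel →₀ ℤ) →+ ((X →₀ ℤ) ⧸ N) :=
      (Finsupp.lift ((X →₀ ℤ) ⧸ N) ℤ (Quot orbRel) g).toAddMonoidHom
    have hΦsingle : ∀ (q : Quot orbRel) (n : ℤ), Φ (Finsupp.single q n) = n • g q := by
      intro q n
      show (Finsupp.lift ((X →₀ ℤ) ⧸ N) ℤ (Quot orbRel) g) (Finsupp.single q n) = n • g q
      rw [Finsupp.lift_apply]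
      exact Finsupp.sum_single_index (zero_smul ℤ (g q))
    have key1 : ∀ m : X →₀ ℤ, Φ (f m) = QuotientAddGroup.mk m := by
      have : Φ.comp f = QuotientAddGroup.mk' N := by
        apply Finsupp.addHom_ext
        intro x n
        rw [AddMonoidHom.comp_apply, hfdef, Finsupp.mapDomain_single, hΦsingle]
        show n • (QuotientAddGroup.mk (Finsupp.single x 1) : (X →₀ ℤ) ⧸ N) = _
        rw [← QuotientAddGroup.mk_zsmul, Finsupp.smul_single, smul_eq_mul, mul_one]
        rfl
      intro m
      exact DFunLike.congr_fun this m
    have key2 : ∀ l, fbar (Φ l) = l := by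
      have : fbar.comp Φ = AddMonoidHom.id _ := by
        apply Finsupp.addHom_ext
        intro q n
        induction q using Quot.ind with
        | _ x =>
          rw [AddMonoidHom.comp_apply, hΦsingle]
          show fbar (n • (QuotientAddGroup.mk (Finsupp.single x 1))) = _
          rw [map_zsmul]
          have h1 : fbar (QuotientAddGroup.mk (Finsupp.single x 1)) =
              Finsupp.single (Quot.mk orbRel x) 1 := Finsupp.mapDomain_single
          rw [h1, Finsupp.smul_single, smul_eq_mul, mul_one]
          rfl
      intro l
      exact DFunLike.congr_fun this l
    refine ⟨{ toFun := Φ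
              invFun := fbar
              left_inv := key2
              right_inv := ?_
              map_add' := Φ.map_add }, ?_⟩
    · intro m
      induction m using QuotientAddGroup.induction_on with
      | _ z =>
        have : fbar (QuotientAddGroup.mk z) = f z := rfl
        rw [this, key1]
    · intro x
      show Φ (Finsupp.single (Quot.mk orbRel x) 1) = _
      rw [hΦsingle, one_smul]
  · classical
    have hshift : ∀ (n : ℤ) (m : X →₀ ℤ),
        shift n m = Finsupp.mapDomain (fun x => n +ᵥ x) m := fun _ _ => rfl
    have hinj : ∀ n : ℤ, Function.Injective (fun y : X => n +ᵥ y) := by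
      intro n a b h
      have h2 := congrArg (fun z => (-n) +ᵥ z) h
      simpa [vadd_vadd] using h2
    -- orbRel is an equivalence
    have hequiv : Equivalence orbRel := by
      refine ⟨fun x => ⟨0, zero_vadd ℤ x⟩, ?_, ?_⟩
      · rintro x y ⟨n, rfl⟩
        exact ⟨-n, by rw [vadd_vadd, neg_add_cancel, zero_vadd]⟩
      · rintro x y z ⟨n, rfl⟩ ⟨m, rfl⟩
        exact ⟨m + n, (vadd_vadd m n x).symm⟩
    have hmkeq : ∀ x y : X, Quot.mk orbRel x = Quot.mk orbRel y ↔ orbRel x y := by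
      intro x y
      exact ⟨fun h => hequiv.eqvGen_iff.mp (Quot.eqvGen_exact h),
        fun h => Quot.eqvGen_sound (Relation.EqvGen.rel x y h)⟩
    -- equal orbits
    have horbeq : ∀ x y : X, orbRel x y →
        (Set.range fun n : ℤ => n +ᵥ x) = (Set.range fun n : ℤ => n +ᵥ y) := by
      rintro x y ⟨n, rfl⟩
      ext z
      constructor
      · rintro ⟨m, rfl⟩
        exact ⟨m - n, by show (m - n) +ᵥ (n +ᵥ x) = m +ᵥ x; rw [vadd_vadd, sub_add_cancel]⟩
      · rintro ⟨m, rfl⟩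
        exact ⟨m + n, (vadd_vadd m n x).symm⟩
    -- pointwise invariance
    have hinvpt : ∀ m : X →₀ ℤ, (∀ n, shift n m = m) → ∀ (n : ℤ) (x : X),
        m (n +ᵥ x) = m x := by
      intro m hm n x
      calc m (n +ᵥ x) = (shift n m) (n +ᵥ x) := by rw [hm n]
        _ = m x := by rw [hshift]; exact Finsupp.mapDomain_apply (hinj n) m x
    -- the orbit sum
    set S : ∀ (x : X), (Set.range fun n : ℤ => n +ᵥ x).Finite → (X →₀ ℤ) :=
      fun x hx => ∑ y ∈ hx.toFinset, Finsupp.single y 1 with hS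
    have hSapply : ∀ (x : X) (hx : (Set.range fun n : ℤ => n +ᵥ x).Finite) (z : X),
        S x hx z = if z ∈ hx.toFinset then 1 else 0 := by
      intro x hx z
      rw [hS]
      simp only [Finset.sum_apply', Finsupp.single_apply]
      rw [Finset.sum_ite_eq' hx.toFinset z (fun _ => (1 : ℤ))]
    have hSwd : ∀ (x y : X) (hx : (Set.range fun n : ℤ => n +ᵥ x).Finite)
        (hy : (Set.range fun n : ℤ => n +ᵥ y).Finite),
        Quot.mk orbRel x = Quot.mk orbRel y → S x hx = S y hy := by
      intro x y hx hy h
      have h2 := horbeq x y ((hmkeq x y).mp h)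
      have h3 : hx.toFinset = hy.toFinset := by
        ext z
        simp [Set.Finite.mem_toFinset, h2]
      simp only [hS, h3]
    have hSinv : ∀ (x : X) (hx : (Set.range fun n : ℤ => n +ᵥ x).Finite) (n : ℤ),
        shift n (S x hx) = S x hx := by
      intro x hx n
      rw [hS]
      simp only [map_sum]
      have h1 : ∀ y : X, shift n (Finsupp.single y 1) = Finsupp.single (n +ᵥ y) 1 := by
        intro y; rw [hshift, Finsupp.mapDomain_single]
      simp only [h1]
      refine Finset.sum_nbij' (fun y => n +ᵥ y) (fun y => (-n) +ᵥ y) ?_ ?_ ?_ ?_ ?_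
      · rintro a ha
        rw [Set.Finite.mem_toFinset, Set.mem_range] at ha ⊢
        obtain ⟨m, rfl⟩ := ha
        exact ⟨n + m, (vadd_vadd n m x).symm⟩
      · rintro a ha
        rw [Set.Finite.mem_toFinset, Set.mem_range] at ha ⊢
        obtain ⟨m, rfl⟩ := ha
        exact ⟨-n + m, (vadd_vadd (-n) m x).symm⟩
      · intro a _
        show (-n) +ᵥ (n +ᵥ a) = a
        rw [vadd_vadd, neg_add_cancel, zero_vadd]
      · intro a _
        show n +ᵥ ((-n) +ᵥ a) = a
        rw [vadd_vadd, add_neg_cancel, zero_vadd]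
      · intro a _
        rfl
    -- the subtype of finite orbits
    set P := {q : Quot orbRel // ∃ x : X,
        (Set.range fun n : ℤ => n +ᵥ x).Finite ∧ Quot.mk orbRel x = q} with hP
    -- chosen representative
    set rep : P → X := fun q => q.2.choose with hrep
    have hrepfin : ∀ q : P, (Set.range fun n : ℤ => n +ᵥ rep q).Finite :=
      fun q => q.2.choose_spec.1
    have hrepmk : ∀ q : P, Quot.mk orbRel (rep q) = q.1 := fun q => q.2.choose_spec.2
    set g1 : P → (X →₀ ℤ) := fun q => S (rep q) (hrepfin q) with hg1
    have g1mem : ∀ q : P, g1 q ∈ Inv := fun q n => hSinv (rep q) (hrepfin q) n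
    set g1' : P → Inv := fun q => ⟨g1 q, g1mem q⟩ with hg1'
    set Φ : (P →₀ ℤ) →+ Inv := (Finsupp.lift Inv ℤ P g1').toAddMonoidHom with hΦ
    have hΦapp : ∀ l : P →₀ ℤ, (Φ l : X →₀ ℤ) = ∑ p ∈ l.support, l p • g1 p := by
      intro l
      have : Φ l = ∑ p ∈ l.support, l p • g1' p := by
        rw [hΦ]
        show (Finsupp.lift Inv ℤ P g1') l = _
        rw [Finsupp.lift_apply]
        rfl
      rw [this]
      push_cast
      rfl
    -- value of Φ l at a point
    have hΦval : ∀ (l : P →₀ ℤ) (z : X), (Φ l : X →₀ ℤ) z =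
        ∑ p ∈ l.support, l p * (if z ∈ (hrepfin p).toFinset then 1 else 0) := by
      intro l z
      rw [hΦapp]
      rw [Finset.sum_apply']
      refine Finset.sum_congr rfl fun p _ => ?_
      rw [Finsupp.smul_apply, smul_eq_mul, hg1, hSapply]
    -- membership in orbit finset vs class equality
    have hmem : ∀ (p : P) (z : X), z ∈ (hrepfin p).toFinset ↔ Quot.mk orbRel z = p.1 := by
      intro p z
      rw [Set.Finite.mem_toFinset, Set.mem_range]
      constructor
      · rintro ⟨n, rfl⟩
        rw [← hrepmk p, hmkeq]
        exact hequiv.symm ⟨n, rfl⟩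
      · intro h
        rw [← hrepmk p, hmkeq] at h
        exact hequiv.symm h
    -- the inverse map
    have hΨsupp : ∀ m : Inv, ∀ q : P, (m : X →₀ ℤ) (rep q) ≠ 0 →
        q ∈ (((m : X →₀ ℤ).support.image (Quot.mk orbRel)).subtype
          (fun q => ∃ x : X, (Set.range fun n : ℤ => n +ᵥ x).Finite ∧ Quot.mk orbRel x = q)) := by
      intro m q h
      rw [Finset.mem_subtype]
      refine Finset.mem_image.mpr ⟨rep q, Finsupp.mem_support_iff.mpr h, hrepmk q⟩
    set Ψ : Inv → (P →₀ ℤ) := fun m => Finsupp.onFinset _ (fun q => (m : X →₀ ℤ) (rep q))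
      (hΨsupp m) with hΨ
    have hΨapp : ∀ (m : Inv) (q : P), Ψ m q = (m : X →₀ ℤ) (rep q) := fun _ _ => rfl
    -- invariance along an orbit: if same class, same value
    have hinvcl : ∀ (m : Inv) (a b : X), Quot.mk orbRel a = Quot.mk orbRel b →
        (m : X →₀ ℤ) a = (m : X →₀ ℤ) b := by
      intro m a b h
      obtain ⟨n, rfl⟩ := (hmkeq a b).mp h
      exact (hinvpt m m.2 n a).symm
    -- left inverse
    have hleft : ∀ l : P →₀ ℤ, Ψ (Φ l) = l := by
      intro l
      ext q
      rw [hΨapp, hΦval]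
      have hPQ : ∀ p : P, (rep q ∈ (hrepfin p).toFinset) ↔ p = q := by
        intro p
        rw [hmem p (rep q), hrepmk q]
        exact ⟨fun h => Subtype.ext h.symm, fun h => (congrArg Subtype.val h).symm⟩
      have hthis : ∀ p : P, (if rep q ∈ (hrepfin p).toFinset then (1:ℤ) else 0)
          = if p = q then 1 else 0 := fun p => if_congr (hPQ p) rfl rfl
      simp only [hthis, mul_ite, mul_one, mul_zero]
      rw [Finset.sum_ite_eq' l.support q (fun p => l p)]
      by_cases hq : q ∈ l.support
      · rw [if_pos hq]
      · rw [if_neg hq]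
        exact (Finsupp.notMem_support_iff.mp hq).symm
    -- right inverse
    have hright : ∀ m : Inv, Φ (Ψ m) = m := by
      intro m
      apply Subtype.ext
      ext z
      rw [hΦval]
      by_cases hz : (m : X →₀ ℤ) z = 0
      · rw [hz]
        refine Finset.sum_eq_zero fun p _ => ?_
        by_cases hmem' : z ∈ (hrepfin p).toFinset
        · rw [if_pos hmem', mul_one, hΨapp]
          rw [hinvcl m (rep p) z (by rw [hrepmk p, ← (hmem p z).mp hmem'])]
          exact hz
        · rw [if_neg hmem', mul_zero]
      · -- z has finite orbit
        have hzfin : (Set.range fun n : ℤ => n +ᵥ z).Finite := by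
          apply Set.Finite.subset (m : X →₀ ℤ).finite_support
          rintro w ⟨n, rfl⟩
          simp only [Function.mem_support]
          rw [hinvpt m m.2 n z]
          exact hz
        set q₀ : P := ⟨Quot.mk orbRel z, z, hzfin, rfl⟩ with hq₀
        have hiff : ∀ p : P, (z ∈ (hrepfin p).toFinset) ↔ p = q₀ := by
          intro p
          rw [hmem p z, eq_comm, Subtype.ext_iff]
        have hterm : ∀ p : P, (Ψ m) p * (if z ∈ (hrepfin p).toFinset then (1:ℤ) else 0)
            = if p = q₀ then (m : X →₀ ℤ) z else 0 := by
          intro p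
          by_cases h : p = q₀
          · rw [if_pos ((hiff p).mpr h), if_pos h, mul_one, hΨapp]
            refine hinvcl m (rep p) z ?_
            rw [hrepmk p, h]
          · rw [if_neg (fun hh => h ((hiff p).mp hh)), if_neg h, mul_zero]
        simp only [hterm]
        have hq₀mem : q₀ ∈ (Ψ m).support := by
          rw [Finsupp.mem_support_iff, hΨapp]
          rw [hinvcl m (rep q₀) z ((hrepmk q₀).trans rfl)]
          exact hz
        rw [Finset.sum_ite_eq' (Ψ m).support q₀ (fun _ => (m : X →₀ ℤ) z), if_pos hq₀mem]
    refine ⟨{ toFun := Φ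
              invFun := Ψ
              left_inv := hleft
              right_inv := hright
              map_add' := Φ.map_add }, ?_⟩
    intro x hx
    show (Φ (Finsupp.single ⟨Quot.mk orbRel x, x, hx, rfl⟩ 1) : X →₀ ℤ) = _
    rw [hΦapp]
    rw [Finsupp.support_single_ne_zero _ one_ne_zero, Finset.sum_singleton,
      Finsupp.single_eq_same, one_smul]
    exact hSwd _ x (hrepfin _) hx (hrepmk ⟨Quot.mk orbRel x, x, hx, rfl⟩)
end

section
/- Let E be a finite directed graph and p a function from the edges of E to the positive integers, extended multiplicatively to paths (p of a path is the product of p over its edges; p of a trivial path is 1). Let ℤE* be the free abelian group on the set of all paths of E (including trivial paths), and let Δ be the homomorphism from the free abelian group on the set of composable pairs of paths (μ, ν) (with source(μ) = range(ν)) to ℤE* given by Δ(μ, ν) = ν − μν + p(ν)·μ, where μν denotes concatenation. Then ℤE* is the internal direct sum of the subgroup ℤE¹ generated by the paths of length one and the image of Δ: ℤE* = ℤE¹ + im(Δ) and im(Δ) ∩ ℤE¹ = {0}. -/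
universe v u

/-- The multiplicative extension of an edge-weighting `p` to paths: `p` of a path is the
product of `p` over its edges, and `p` of a trivial path is `1`. -/
def pathWeight {V : Type u} [Quiver.{v + 1} V] (p : ∀ {a b : V}, (a ⟶ b) → ℕ) :
    ∀ {a b : V}, Quiver.Path a b → ℕ
  | _, _, Quiver.Path.nil => 1
  | _, _, Quiver.Path.cons q e => pathWeight p q * p e

/-!
Compose paths left to right, `νμ = ν.comp μ`. The map `φ` sending a path `e₁ ⋯ eₙ` to
`∑ᵢ p(e₁ ⋯ eᵢ₋₁) • eᵢ` is a retraction of `ℤE*` onto `ℤE¹`. Since `p` is multiplicative,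
`φ(νμ) = φ(ν) + p(ν) φ(μ)`, which says exactly that `φ` kills the generators
`ν - νμ + p(ν) μ` of `im Δ`; hence `im Δ ∩ ℤE¹ = 0`. Conversely, the generator
`ν - νe + p(ν) e` peels the last edge `e` off the path `νe`, and for a trivial path `a`
the generator `a - a + a` is `a` itself, so by induction on length every path lies in
`ℤE¹ + im Δ`.
-/

namespace Quiver.Path

noncomputable section

variable {V : Type u} [Quiver.{v + 1} V] (p : ∀ {a b : V}, (a ⟶ b) → ℕ)

lemma pathWeight_comp {a b c : V} (ν : Path a b) (μ : Path b c) :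
    pathWeight p (ν.comp μ) = pathWeight p ν * pathWeight p μ := by
  induction μ with
  | nil => simp [pathWeight]
  | cons μ e ih => simp [pathWeight, ih, mul_assoc]

lemma exists_eq_toPath_of_length_eq_one {a b : V} (q : Path a b) (h : q.length = 1) :
    ∃ e : a ⟶ b, q = e.toPath := by
  cases q with
  | nil => simp at h
  | cons q e =>
    cases q with
    | nil => exact ⟨e, rfl⟩
    | cons q e' => simp at h

variable (V) in
/-- `ℤE*`. -/
abbrev FreePaths : Type _ := (Σ a b : V, Path a b) →₀ ℤ

variable (V) in
abbrev FreeComposablePairs : Type _ := (Σ a b c : V, Path a b × Path b c) →₀ ℤ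

def weightedEdges : ∀ {a b : V}, Path a b → FreePaths V
  | _, _, nil => 0
  | _, _, cons q e =>
    weightedEdges q + (pathWeight p q : ℤ) • Finsupp.single ⟨_, _, e.toPath⟩ 1

lemma weightedEdges_comp {a b c : V} (ν : Path a b) (μ : Path b c) :
    weightedEdges p (ν.comp μ) =
      weightedEdges p ν + (pathWeight p ν : ℤ) • weightedEdges p μ := by
  induction μ with
  | nil => simp [weightedEdges]
  | cons μ e ih =>
    simp only [comp_cons, weightedEdges, ih, pathWeight_comp, Nat.cast_mul, smul_add, mul_smul]
    abel

lemma weightedEdges_toPath {a b : V} (e : a ⟶ b) :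
    weightedEdges p e.toPath = Finsupp.single ⟨a, b, e.toPath⟩ 1 := by
  simp [Hom.toPath, weightedEdges, pathWeight]

/-- `Δ`, with the paper's pair `(μ, ν)` stored as `⟨a, b, c, (ν, μ)⟩`. -/
def coboundary : FreeComposablePairs V →+ FreePaths V :=
  Finsupp.liftAddHom fun q =>
    zmultiplesHom (FreePaths V)
      (Finsupp.single ⟨q.1, q.2.1, q.2.2.2.1⟩ 1
        - Finsupp.single ⟨q.1, q.2.2.1, q.2.2.2.1.comp q.2.2.2.2⟩ 1
        + (pathWeight p q.2.2.2.1 : ℤ) • Finsupp.single ⟨q.2.1, q.2.2.1, q.2.2.2.2⟩ 1)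

lemma coboundary_single {a b c : V} (ν : Path a b) (μ : Path b c) :
    coboundary p (Finsupp.single ⟨a, b, c, (ν, μ)⟩ 1) =
      Finsupp.single ⟨a, b, ν⟩ 1 - Finsupp.single ⟨a, c, ν.comp μ⟩ 1
        + (pathWeight p ν : ℤ) • Finsupp.single ⟨b, c, μ⟩ 1 := by
  simp [coboundary]

variable (V) in
/-- `ℤE¹`. -/
def edgeSubgroup : AddSubgroup (FreePaths V) :=
  AddSubgroup.closure
    {f | ∃ x : Σ a b : V, Path a b, x.2.2.length = 1 ∧ f = Finsupp.single x 1}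

def edgeRetraction : FreePaths V →+ FreePaths V :=
  Finsupp.liftAddHom fun x => zmultiplesHom (FreePaths V) (weightedEdges p x.2.2)

lemma edgeRetraction_single {a b : V} (q : Path a b) :
    edgeRetraction p (Finsupp.single ⟨a, b, q⟩ 1) = weightedEdges p q := by
  simp [edgeRetraction]

lemma edgeRetraction_comp_coboundary : (edgeRetraction p).comp (coboundary p) = 0 := by
  ext ⟨a, b, c, ν, μ⟩ : 2
  simp only [AddMonoidHom.comp_apply, Finsupp.singleAddHom_apply, AddMonoidHom.zero_comp,
    AddMonoidHom.zero_apply, coboundary_single, map_add, map_sub, map_zsmul,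
    edgeRetraction_single, weightedEdges_comp]
  abel

lemma edgeRetraction_apply_of_mem_edgeSubgroup {f : FreePaths V} (hf : f ∈ edgeSubgroup V) :
    edgeRetraction p f = f := by
  induction hf using AddSubgroup.closure_induction with
  | mem f hf =>
    obtain ⟨⟨a, b, q⟩, hlen, rfl⟩ := hf
    obtain ⟨e, rfl⟩ := exists_eq_toPath_of_length_eq_one q hlen
    simp only [edgeRetraction_single, weightedEdges_toPath]
  | zero => simp
  | add f g _ _ hf hg => rw [map_add, hf, hg]
  | neg f _ hf => rw [map_neg, hf]

lemma single_mem_edgeSubgroup_sup_range_coboundary {a b : V} (q : Path a b) :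
    Finsupp.single ⟨a, b, q⟩ 1 ∈ edgeSubgroup V ⊔ (coboundary p).range := by
  induction q with
  | nil =>
    refine AddSubgroup.mem_sup_right ⟨Finsupp.single ⟨a, a, a, (nil, nil)⟩ 1, ?_⟩
    simp only [coboundary_single, comp_nil, pathWeight, Nat.cast_one, one_smul]
    abel
  | @cons m c q e ih =>
    have peel : Finsupp.single ⟨a, c, q.cons e⟩ 1 =
        Finsupp.single ⟨a, m, q⟩ 1
          + (pathWeight p q : ℤ) • Finsupp.single ⟨m, c, e.toPath⟩ 1
          - coboundary p (Finsupp.single ⟨a, m, c, (q, e.toPath)⟩ 1) := by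
      rw [coboundary_single, comp_toPath_eq_cons]
      abel
    have edge_mem : Finsupp.single ⟨m, c, e.toPath⟩ 1 ∈ edgeSubgroup V :=
      AddSubgroup.subset_closure ⟨_, length_toPath e, rfl⟩
    rw [peel]
    exact sub_mem (add_mem ih (zsmul_mem (AddSubgroup.mem_sup_left edge_mem) _))
      (AddSubgroup.mem_sup_right ⟨_, rfl⟩)

lemma edgeSubgroup_sup_range_coboundary_eq_top : edgeSubgroup V ⊔ (coboundary p).range = ⊤ := by
  rw [eq_top_iff]
  rintro f -
  induction f using Finsupp.induction_linear with
  | zero => exact zero_mem _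
  | add f g hf hg => exact add_mem hf hg
  | single x n =>
    rw [← Finsupp.smul_single_one]
    exact zsmul_mem (single_mem_edgeSubgroup_sup_range_coboundary p x.2.2) n

lemma range_coboundary_inf_edgeSubgroup_eq_bot : (coboundary p).range ⊓ edgeSubgroup V = ⊥ := by
  refine eq_bot_iff.2 ?_
  rintro _ ⟨⟨z, rfl⟩, hz⟩
  rw [AddSubgroup.mem_bot, ← edgeRetraction_apply_of_mem_edgeSubgroup p hz,
    ← AddMonoidHom.comp_apply, edgeRetraction_comp_coboundary, AddMonoidHom.zero_apply]

end

end Quiver.Path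

/-- Let `E` be a finite directed graph and `p` an edge-weighting by
positive integers, extended multiplicatively to paths.  Let `Δ` be the homomorphism from
the free abelian group on composable pairs of paths `(μ, ν)` to `ℤE*` (the free abelian
group on all paths) given by `Δ(μ, ν) = ν − μν + p(ν)·μ`.  Then
`ℤE* = ℤE¹ + im(Δ)` and `im(Δ) ∩ ℤE¹ = {0}`, where `ℤE¹` is the subgroup generated by the
paths of length one. -/
theorem freeAbelianPaths_internal_direct_sum
    (V : Type u) [Quiver.{v + 1} V] [Fintype V] [∀ a b : V, Fintype (a ⟶ b)]
    (p : ∀ {a b : V}, (a ⟶ b) → ℕ) (hp : ∀ {a b : V} (e : a ⟶ b), 1 ≤ p e) :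
    -- `ℤE*`, the free abelian group on all paths (a path `ν : Path a b` has source `a`
    -- and range `b`); composable pairs `(μ, ν)` with `source(μ) = range(ν)` are encoded
    -- as `⟨a, b, c, (ν, μ)⟩` with `ν : Path a b`, `μ : Path b c`, concatenation `ν.comp μ`.
    let ZEstar := ((Σ a b : V, Quiver.Path a b) →₀ ℤ)
    let Δ : ((Σ a b c : V, Quiver.Path a b × Quiver.Path b c) →₀ ℤ) →+ ZEstar :=
      Finsupp.liftAddHom (fun q =>
        (zmultiplesHom ZEstar)
          (Finsupp.single ⟨q.1, q.2.1, q.2.2.2.1⟩ 1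
            - Finsupp.single ⟨q.1, q.2.2.1, q.2.2.2.1.comp q.2.2.2.2⟩ 1
            + (pathWeight p q.2.2.2.1 : ℤ) • Finsupp.single ⟨q.2.1, q.2.2.1, q.2.2.2.2⟩ 1))
    let ZE1 : AddSubgroup ZEstar :=
      AddSubgroup.closure
        {f | ∃ x : Σ a b : V, Quiver.Path a b, x.2.2.length = 1 ∧ f = Finsupp.single x 1}
    ZE1 ⊔ Δ.range = ⊤ ∧ Δ.range ⊓ ZE1 = ⊥ :=
  ⟨Quiver.Path.edgeSubgroup_sup_range_coboundary_eq_top p,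
    Quiver.Path.range_coboundary_inf_edgeSubgroup_eq_bot p⟩
end

section
/- Let E be a finite directed graph with E¹ ≠ ∅ which is strongly connected (for all vertices v, w there is a path with range v and source w), and let p : E¹ → ℕ satisfy p(e) ≥ 1 for all e and p(e) > 1 for at least one e. Let M : (E¹ →₀ ℤ) → (E⁰ →₀ ℤ) be the ℤ-linear map with M(δ_e) = p(e)·δ_{r(e)} − δ_{s(e)}. Then: (i) the cokernel (E⁰ →₀ ℤ)/range(M) is a finite cyclic group; (ii) the kernel of M is a free abelian group of rank |E¹| − |E⁰|; and (iii) if the greatest common divisor of the set {p(μ) − p(ν) : μ, ν paths in E with the same source and the same range} equals 1 (p extended multiplicatively to paths), then M is surjective, i.e. the cokernel is trivial. -/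
/-
In the cokernel of `M`, the relation `M δ_e ∈ range M` says `[δ_{s e}] = p(e) [δ_{r e}]`, so along
any path `μ` from `z` to `y` we get `[δ_z] = p(μ) [δ_y]`. By strong connectivity every `[δ_z]` is a
multiple of a single `[δ_y]`, so the cokernel is cyclic; a loop `L` of weight `p(L) > 1` gives
`(p(L) - 1) [δ_y] = 0`, so it is finite. Two parallel paths `μ, ν` ending at `b` give
`(p(μ) - p(ν)) [δ_b] = 0`, so the order of the cokernel divides every `p(μ) - p(ν)`. Finally, a
finite cokernel means `range M` has full rank `|E⁰|`, and the kernel, a subgroup of a free abelian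
group of rank `|E¹|`, is free of rank `|E¹| - |E⁰|` by rank-nullity.
-/

universe u v

/-- Paths in a directed graph with vertex set `V`, edge set `E`, and range and source maps
`r, s : E → V`.  `GPath r s z y` is a path with source `z` and range `y` (edges are adjoined
at the range end, and `cons e rest` requires `range(rest) = s e`). -/
inductive GPath {V : Type u} {E : Type v} (r s : E → V) : V → V → Type (max u v)
  | nil (v : V) : GPath r s v v
  | cons (e : E) {z : V} (rest : GPath r s z (s e)) : GPath r s z (r e)

def GPath.weight {V : Type u} {E : Type v} {r s : E → V} (p : E → ℕ) :
    ∀ {z y : V}, GPath r s z y → ℕ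
  | _, _, GPath.nil _ => 1
  | _, _, GPath.cons e rest => p e * GPath.weight p rest

open Finsupp Module

theorem AddMonoidHom.nonempty_ker_addEquiv_of_finiteIndex {ι κ : Type*} [Fintype ι] [Fintype κ]
    (f : (ι →₀ ℤ) →+ (κ →₀ ℤ)) [f.range.FiniteIndex] :
    Nonempty (f.ker ≃+ (Fin (Fintype.card ι - Fintype.card κ) →₀ ℤ)) := by
  have hrange : finrank ℤ f.range = Fintype.card κ := by
    rw [f.range.finrank_eq_of_finiteIndex, finrank_finsupp_self]
  have hnullity : finrank ℤ f.range + finrank ℤ (LinearMap.ker f.toIntLinearMap) =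
      Fintype.card ι := by
    rw [← finrank_finsupp_self (R := ℤ),
      ← (LinearMap.ker f.toIntLinearMap).finrank_quotient_add_finrank,
      f.toIntLinearMap.quotKerEquivRange.finrank_eq]
    rfl
  exact ⟨(finBasisOfFinrankEq ℤ (LinearMap.ker f.toIntLinearMap) (by omega)).repr.toAddEquiv⟩

namespace GPath

variable {V : Type u} {E : Type v} {r s : E → V}

lemma one_le_weight {p : E → ℕ} (hp : ∀ e, 1 ≤ p e) :
    ∀ {z y : V} (P : GPath r s z y), 1 ≤ P.weight p
  | _, _, nil _ => le_rfl
  | _, _, cons e rest => one_le_mul_of_one_le_of_one_le (hp e) (one_le_weight hp rest)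

lemma exists_loop_one_lt_weight (hconn : ∀ v w : V, Nonempty (GPath r s w v)) {p : E → ℕ}
    (hp : ∀ e, 1 ≤ p e) (hbig : ∃ e, 1 < p e) : ∃ (v : V) (L : GPath r s v v), 1 < L.weight p := by
  obtain ⟨e, he⟩ := hbig
  obtain ⟨P⟩ := hconn (s e) (r e)
  exact ⟨r e, cons e P, lt_mul_of_lt_of_one_le he (one_le_weight hp P)⟩

end GPath

noncomputable section WeightedIncidence

variable {V : Type u} {E : Type v} (r s : E → V) (p : E → ℕ)

def weightedIncidence : (E →₀ ℤ) →+ (V →₀ ℤ) :=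
  liftAddHom fun e => zmultiplesHom (V →₀ ℤ) ((p e : ℤ) • single (r e) 1 - single (s e) 1)

lemma weightedIncidence_single_one (e : E) :
    weightedIncidence r s p (single e 1) = (p e : ℤ) • single (r e) 1 - single (s e) 1 := by
  simp [weightedIncidence]

def vertexClass (v : V) : (V →₀ ℤ) ⧸ (weightedIncidence r s p).range :=
  QuotientAddGroup.mk (single v 1)

lemma vertexClass_source (e : E) :
    vertexClass r s p (s e) = (p e : ℤ) • vertexClass r s p (r e) := by
  rw [vertexClass, vertexClass, ← QuotientAddGroup.mk_zsmul, QuotientAddGroup.eq]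
  exact ⟨single e 1, by rw [weightedIncidence_single_one]; abel⟩

lemma vertexClass_eq_weight_smul {z y : V} (P : GPath r s z y) :
    vertexClass r s p z = (P.weight p : ℤ) • vertexClass r s p y := by
  induction P with
  | nil v => simp [GPath.weight]
  | cons e rest ih => rw [ih, vertexClass_source, smul_smul, GPath.weight]; push_cast; ring_nf

lemma zmultiples_vertexClass_eq_top {y : V} (hy : ∀ z, Nonempty (GPath r s z y)) :
    AddSubgroup.zmultiples (vertexClass r s p y) = ⊤ := by
  refine (AddSubgroup.eq_top_iff' _).2 fun x => ?_
  induction x using QuotientAddGroup.induction_on with | H x => ?_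
  induction x using Finsupp.induction_linear with
  | zero => exact zero_mem _
  | add f g hf hg => exact add_mem hf hg
  | single z a =>
    obtain ⟨P⟩ := hy z
    rw [← smul_single_one, QuotientAddGroup.mk_zsmul, ← vertexClass,
      vertexClass_eq_weight_smul r s p P, smul_smul]
    exact AddSubgroup.zsmul_mem_zmultiples _ _

variable {r s p}

theorem isAddCyclic_coker_weightedIncidence (hconn : ∀ v w : V, Nonempty (GPath r s w v)) :
    IsAddCyclic ((V →₀ ℤ) ⧸ (weightedIncidence r s p).range) := by
  rcases isEmpty_or_nonempty V with _ | ⟨⟨y⟩⟩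
  · have : Subsingleton ((V →₀ ℤ) ⧸ (weightedIncidence r s p).range) :=
      QuotientAddGroup.mk_surjective.subsingleton
    infer_instance
  · exact isAddCyclic_iff_exists_zmultiples_eq_top.2
      ⟨_, zmultiples_vertexClass_eq_top r s p fun z => hconn y z⟩

theorem finite_coker_weightedIncidence (hconn : ∀ v w : V, Nonempty (GPath r s w v))
    (hp : ∀ e, 1 ≤ p e) (hbig : ∃ e, 1 < p e) :
    Finite ((V →₀ ℤ) ⧸ (weightedIncidence r s p).range) := by
  obtain ⟨v, L, hL⟩ := GPath.exists_loop_one_lt_weight hconn hp hbig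
  have hloop : ((L.weight p : ℤ) - 1) • vertexClass r s p v = 0 := by
    rw [sub_smul, one_smul, ← vertexClass_eq_weight_smul r s p L, sub_self]
  have hfin : IsOfFinAddOrder (vertexClass r s p v) :=
    isOfFinAddOrder_iff_zsmul_eq_zero.2 ⟨_, by omega, hloop⟩
  rw [← Set.finite_univ_iff, ← AddSubgroup.coe_top,
    ← zmultiples_vertexClass_eq_top r s p fun z => hconn v z]
  exact hfin.finite_zmultiples

theorem index_range_weightedIncidence_dvd (hconn : ∀ v w : V, Nonempty (GPath r s w v))
    {a b : V} (μ ν : GPath r s a b) :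
    ((weightedIncidence r s p).range.index : ℤ) ∣ μ.weight p - ν.weight p := by
  have hgen := zmultiples_vertexClass_eq_top r s p fun z => hconn b z
  rw [AddSubgroup.index_eq_card,
    ← addOrderOf_eq_card_of_forall_mem_zmultiples fun x => hgen ▸ AddSubgroup.mem_top x,
    addOrderOf_dvd_iff_zsmul_eq_zero, sub_smul, ← vertexClass_eq_weight_smul r s p μ,
    ← vertexClass_eq_weight_smul r s p ν, sub_self]

end WeightedIncidence

theorem weighted_incidence_matrix_kernel_cokernel_general
    (V : Type u) (E : Type v) [Fintype V] [Fintype E] (r s : E → V)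
    -- strong connectivity: for all `v, w` there is a path with range `v` and source `w`:
    (hconn : ∀ v w : V, Nonempty (GPath r s w v))
    (p : E → ℕ) (hp : ∀ e : E, 1 ≤ p e) (hbig : ∃ e : E, 1 < p e) :
    let M : (E →₀ ℤ) →+ (V →₀ ℤ) :=
      Finsupp.liftAddHom (fun e =>
        (zmultiplesHom (V →₀ ℤ))
          ((p e : ℤ) • Finsupp.single (r e) 1 - Finsupp.single (s e) 1))
    -- (i) the cokernel is a finite cyclic group:
    (Finite ((V →₀ ℤ) ⧸ M.range) ∧ IsAddCyclic ((V →₀ ℤ) ⧸ M.range)) ∧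
    -- (ii) the kernel is free abelian of rank `|E¹| − |E⁰|`:
    Nonempty ((M.ker) ≃+ (Fin (Fintype.card E - Fintype.card V) →₀ ℤ)) ∧
    -- (iii) if `gcd {p(μ) − p(ν)} = 1` (every common divisor is a unit) then `M` is onto:
    ((∀ d : ℤ, (∀ x : ℤ,
        (∃ (a b : V) (μ ν : GPath r s a b),
          x = (GPath.weight p μ : ℤ) - (GPath.weight p ν : ℤ)) → d ∣ x) → IsUnit d) →
      Function.Surjective M) := by
  intro M
  have hfin : Finite ((V →₀ ℤ) ⧸ M.range) := finite_coker_weightedIncidence hconn hp hbig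
  refine ⟨⟨hfin, isAddCyclic_coker_weightedIncidence hconn⟩, ?_, fun hgcd => ?_⟩
  · have := AddSubgroup.finiteIndex_of_finite_quotient (H := M.range)
    exact M.nonempty_ker_addEquiv_of_finiteIndex
  · have hunit := hgcd _ fun x ⟨a, b, μ, ν, hx⟩ =>
      hx ▸ index_range_weightedIncidence_dvd (p := p) hconn μ ν
    rwa [Int.ofNat_isUnit, Nat.isUnit_iff, AddSubgroup.index_eq_one,
      AddMonoidHom.range_eq_top] at hunit

/-- **Statement 16.** Let `E` be a finite strongly connected directed graph with at least one
edge, and `p : E¹ → ℕ` with `p(e) ≥ 1` everywhere and `p(e) > 1` somewhere.  Let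
`M : ℤE¹ → ℤE⁰` be given by `M(δ_e) = p(e)·δ_{r(e)} − δ_{s(e)}`.  Then the cokernel of `M`
is a finite cyclic group, the kernel of `M` is free abelian of rank `|E¹| − |E⁰|`, and if
`gcd {p(μ) − p(ν) : μ, ν parallel paths} = 1` then `M` is surjective. -/
theorem weighted_incidence_matrix_kernel_cokernel
    (V : Type u) (E : Type v) [Fintype V] [Fintype E] (r s : E → V)
    (hE : Nonempty E)
    -- strong connectivity: for all `v, w` there is a path with range `v` and source `w`:
    (hconn : ∀ v w : V, Nonempty (GPath r s w v))
    (p : E → ℕ) (hp : ∀ e : E, 1 ≤ p e) (hbig : ∃ e : E, 1 < p e) :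
    let M : (E →₀ ℤ) →+ (V →₀ ℤ) :=
      Finsupp.liftAddHom (fun e =>
        (zmultiplesHom (V →₀ ℤ))
          ((p e : ℤ) • Finsupp.single (r e) 1 - Finsupp.single (s e) 1))
    -- (i) the cokernel is a finite cyclic group:
    (Finite ((V →₀ ℤ) ⧸ M.range) ∧ IsAddCyclic ((V →₀ ℤ) ⧸ M.range)) ∧
    -- (ii) the kernel is free abelian of rank `|E¹| − |E⁰|`:
    Nonempty ((M.ker) ≃+ (Fin (Fintype.card E - Fintype.card V) →₀ ℤ)) ∧
    -- (iii) if `gcd {p(μ) − p(ν)} = 1` (every common divisor is a unit) then `M` is onto: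
    ((∀ d : ℤ, (∀ x : ℤ,
        (∃ (a b : V) (μ ν : GPath r s a b),
          x = (GPath.weight p μ : ℤ) - (GPath.weight p ν : ℤ)) → d ∣ x) → IsUnit d) →
      Function.Surjective M) :=
  weighted_incidence_matrix_kernel_cokernel_general V E r s hconn p hp hbig
end
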